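/- arXiv:1309.0751 — 14 statements merged into one kernel-verified Lean document; each statement's English description precedes it below -/
import Mathlib

section
/- Let n ≥ 2 and let B = (b_{i,j})_{0≤i,j≤n−1} be an n×n integer matrix with zero diagonal such that vertex 0 is mutable (b_{i,0} ≠ 0 implies b_{0,i} ≠ 0 for all i) and b_{0,i} ≤ 0 for all i (sink type at vertex 0). Then B satisfies the period-1 equations if and only if all of the following hold: (1) for each 1 ≤ i ≤ n−1, either b_{0,i} < 0 and b_{0,n−i} < 0, or b_{0,i} = 0 and b_{0,n−i} = 0; (2) b_{i,0} = −b_{0,n−i} for all 1 ≤ i ≤ n−1; (3) b_{i,j} = b_{0,j−i} whenever 0 < i < j ≤ n−1, and b_{i,j} = −b_{0,n−i+j} whenever 0 < j < i ≤ n−1. -/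
/-- `ε_{i,j} = b_{i,0} · |b_{0,j}|` if `b_{0,i} · b_{0,j} < 0`, and `0` otherwise. -/
def eps (b : ℕ → ℕ → ℤ) (i j : ℕ) : ℤ :=
  if b 0 i * b 0 j < 0 then b i 0 * |b 0 j| else 0

/-- The period-1 equations for an `n × n` B-matrix `b`: mutating the associated double
quiver at vertex 0 and relabeling `(0,1,…,n−1) → (n−1,0,…,n−2)` returns the original
double quiver. -/
def PeriodOneEqs (n : ℕ) (b : ℕ → ℕ → ℤ) : Prop :=
  (∀ i ≤ n - 2, b (n - 1) i = -b 0 (i + 1)) ∧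
  (∀ i ≤ n - 2, b i (n - 1) = -b (i + 1) 0) ∧
  (∀ i ≤ n - 2, ∀ j ≤ n - 2, b i j = b (i + 1) (j + 1) + eps b (i + 1) (j + 1))

/-!
At a sink every `ε_{i,j}` vanishes, so the period-1 equations say that `b` is invariant under
the diagonal shift `(i, j) ↦ (i + 1, j + 1)` and that its last row (and last column) is the
negated first row (column) shifted by one. Sliding an entry along its diagonal to the first row
(above the diagonal) or to the last row (below it) gives the closed formulas, and conversely
these formulas are visibly shift invariant. The sign pattern of the first row then follows from
`b_{i,0} = -b_{0,n-i}` and mutability of vertex `0`.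
-/

section

variable {n : ℕ} {b : ℕ → ℕ → ℤ}

theorem eps_eq_zero_of_nonpos {i j : ℕ} (hi : b 0 i ≤ 0) (hj : b 0 j ≤ 0) : eps b i j = 0 :=
  if_neg (not_lt.mpr (mul_nonneg_of_nonpos_of_nonpos hi hj))

theorem periodOneEqs_iff_of_sink (hn : 2 ≤ n) (hsink : ∀ i < n, b 0 i ≤ 0) :
    PeriodOneEqs n b ↔
      (∀ i ≤ n - 2, b (n - 1) i = -b 0 (i + 1)) ∧
      (∀ i ≤ n - 2, b i (n - 1) = -b (i + 1) 0) ∧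
      (∀ i ≤ n - 2, ∀ j ≤ n - 2, b i j = b (i + 1) (j + 1)) := by
  have heps : ∀ i ≤ n - 2, ∀ j ≤ n - 2, eps b (i + 1) (j + 1) = 0 := fun i hi j hj =>
    eps_eq_zero_of_nonpos (hsink _ (by omega)) (hsink _ (by omega))
  unfold PeriodOneEqs
  refine and_congr_right' (and_congr_right' (forall₂_congr fun i hi => forall₂_congr fun j hj => ?_))
  rw [heps i hi j hj, add_zero]

theorem eq_add_add_of_shift_invariant {N : ℕ}
    (hshift : ∀ i j, i < N → j < N → b i j = b (i + 1) (j + 1)) :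
    ∀ k i j, i + k ≤ N → j + k ≤ N → b i j = b (i + k) (j + k)
  | 0, _, _, _, _ => rfl
  | k + 1, i, j, hi, hj =>
    (eq_add_add_of_shift_invariant hshift k i j (by omega) (by omega)).trans
      (hshift (i + k) (j + k) (by omega) (by omega))

theorem eq_first_row_of_shift_invariant {N : ℕ}
    (hshift : ∀ i j, i < N → j < N → b i j = b (i + 1) (j + 1))
    {i j : ℕ} (hij : i < j) (hj : j ≤ N) : b i j = b 0 (j - i) := by
  have h := eq_add_add_of_shift_invariant hshift i 0 (j - i) (by omega) (by omega)
  rwa [Nat.zero_add, Nat.sub_add_cancel hij.le, eq_comm] at h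

theorem eq_neg_first_row_of_shift_invariant
    (hshift : ∀ i j, i < n - 1 → j < n - 1 → b i j = b (i + 1) (j + 1))
    (hlast : ∀ i ≤ n - 2, b (n - 1) i = -b 0 (i + 1))
    {i j : ℕ} (hji : j < i) (hi : i ≤ n - 1) : b i j = -b 0 (n - i + j) := by
  have h := eq_add_add_of_shift_invariant hshift (n - 1 - i) i j (by omega) (by omega)
  rw [h, show i + (n - 1 - i) = n - 1 by omega, hlast _ (by omega),
    show j + (n - 1 - i) + 1 = n - i + j by omega]

theorem first_row_sign_pattern (hmut : ∀ i < n, b i 0 ≠ 0 → b 0 i ≠ 0)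
    (hsink : ∀ i < n, b 0 i ≤ 0) (hcol : ∀ i, 1 ≤ i → i ≤ n - 1 → b i 0 = -b 0 (n - i))
    {i : ℕ} (h1 : 1 ≤ i) (hi : i ≤ n - 1) :
    (b 0 i < 0 ∧ b 0 (n - i) < 0) ∨ (b 0 i = 0 ∧ b 0 (n - i) = 0) := by
  have hmut_i : b 0 (n - i) ≠ 0 → b 0 i ≠ 0 := fun h =>
    hmut i (by omega) (by rw [hcol i h1 hi]; exact neg_ne_zero.mpr h)
  have hmut_ni : b 0 i ≠ 0 → b 0 (n - i) ≠ 0 := fun h =>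
    hmut (n - i) (by omega) (by rw [hcol (n - i) (by omega) (by omega),
      Nat.sub_sub_self (by omega : i ≤ n)]; exact neg_ne_zero.mpr h)
  rcases (hsink i (by omega)).lt_or_eq with hlt | heq
  · exact Or.inl ⟨hlt, (hsink (n - i) (by omega)).lt_of_ne (hmut_ni hlt.ne)⟩
  · exact Or.inr ⟨heq, not_not.mp (mt hmut_i (not_not.mpr heq))⟩

theorem shift_eqs_of_closed_form (hn : 2 ≤ n) (hdiag : ∀ i < n, b i i = 0)
    (hupper : ∀ i j, i < j → j ≤ n - 1 → b i j = b 0 (j - i))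
    (hlower : ∀ i j, j < i → i ≤ n - 1 → b i j = -b 0 (n - i + j)) :
    (∀ i ≤ n - 2, b (n - 1) i = -b 0 (i + 1)) ∧
    (∀ i ≤ n - 2, b i (n - 1) = -b (i + 1) 0) ∧
    (∀ i ≤ n - 2, ∀ j ≤ n - 2, b i j = b (i + 1) (j + 1)) := by
  refine ⟨fun i hi => ?_, fun i hi => ?_, fun i hi j hj => ?_⟩
  · rw [hlower (n - 1) i (by omega) le_rfl, show n - (n - 1) + i = i + 1 by omega]
  · rw [hupper i (n - 1) (by omega) le_rfl, hlower (i + 1) 0 (by omega) (by omega), neg_neg,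
      show n - (i + 1) + 0 = n - 1 - i by omega]
  · rcases lt_trichotomy i j with hij | rfl | hji
    · rw [hupper i j hij (by omega), hupper (i + 1) (j + 1) (by omega) (by omega),
        Nat.add_sub_add_right]
    · rw [hdiag i (by omega), hdiag (i + 1) (by omega)]
    · rw [hlower i j hji (by omega), hlower (i + 1) (j + 1) (by omega) (by omega),
        show n - (i + 1) + (j + 1) = n - i + j by omega]

end

/-- Theorem 4.6 of the paper: classification of period 1 sink-type double quivers. -/
theorem stmt1 (n : ℕ) (hn : 2 ≤ n) (b : ℕ → ℕ → ℤ)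
    (hdiag : ∀ i < n, b i i = 0)
    (hmut : ∀ i < n, b i 0 ≠ 0 → b 0 i ≠ 0)
    (hsink : ∀ i < n, b 0 i ≤ 0) :
    PeriodOneEqs n b ↔
      ((∀ i, 1 ≤ i → i ≤ n - 1 →
          ((b 0 i < 0 ∧ b 0 (n - i) < 0) ∨ (b 0 i = 0 ∧ b 0 (n - i) = 0))) ∧
       (∀ i, 1 ≤ i → i ≤ n - 1 → b i 0 = -b 0 (n - i)) ∧
       (∀ i j, 0 < i → i < j → j ≤ n - 1 → b i j = b 0 (j - i)) ∧
       (∀ i j, 0 < j → j < i → i ≤ n - 1 → b i j = -b 0 (n - i + j))) := by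
  rw [periodOneEqs_iff_of_sink hn hsink]
  constructor
  · rintro ⟨hlast, -, hshift⟩
    have hshift' : ∀ i j, i < n - 1 → j < n - 1 → b i j = b (i + 1) (j + 1) :=
      fun i j hi hj => hshift i (by omega) j (by omega)
    have hlower : ∀ i j, j < i → i ≤ n - 1 → b i j = -b 0 (n - i + j) :=
      fun _ _ => eq_neg_first_row_of_shift_invariant hshift' hlast
    have hcol : ∀ i, 1 ≤ i → i ≤ n - 1 → b i 0 = -b 0 (n - i) := fun i => hlower i 0
    exact ⟨fun i => first_row_sign_pattern hmut hsink hcol, hcol,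
      fun i j _ => eq_first_row_of_shift_invariant hshift', fun i j _ => hlower i j⟩
  · rintro ⟨-, hcol, hupper, hlower⟩
    refine shift_eqs_of_closed_form hn hdiag (fun i j hij hj => ?_) (fun i j hji hi => ?_)
    · rcases Nat.eq_zero_or_pos i with rfl | hi
      · rw [Nat.sub_zero]
      · exact hupper i j hi hij hj
    · rcases Nat.eq_zero_or_pos j with rfl | hj
      · exact hcol i hji hi
      · exact hlower i j hj hji hi
end

section
/- Let n ≥ 2 and let B = (b_{i,j})_{0≤i,j≤n−1} be an n×n integer matrix with zero diagonal such that vertex 0 is mutable (b_{i,0} ≠ 0 implies b_{0,i} ≠ 0 for all i) and B is mutual at vertex 0 (b_{0,i}·b_{i,0} ≤ 0 for all i). Then B satisfies the period-1 equations if and only if all of the following hold: (1) for each 1 ≤ i ≤ n−1, either b_{0,i}·b_{i,0} < 0, or b_{0,i} = 0 and b_{i,0} = 0; (2) b_{i,0} = −b_{0,n−i} for all 1 ≤ i ≤ n−1; (3) b_{i,j} = −(∑_{k=0}^{i} ε_{i−k,j−k}) + b_{0,j−i} whenever 0 < i < j ≤ n−1; (4) b_{i,j} = −(∑_{k=0}^{j}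 ε_{i−k,j−k}) − b_{0,n−i+j} whenever 0 < j < i ≤ n−1. -/
open Finset

section Signs

variable {α : Type*} [CommRing α] [LinearOrder α] [IsStrictOrderedRing α]

theorem mul_pos_iff_of_mul_neg {c x y : α} (h : c * x < 0) : 0 < c * y ↔ x * y < 0 := by
  constructor <;> intro h'
  · by_contra hxy
    nlinarith [mul_neg_of_neg_of_pos h h', mul_nonneg (mul_self_nonneg c) (not_lt.1 hxy)]
  · by_contra hcy
    nlinarith [mul_pos_of_neg_of_neg h h',
      mul_nonpos_of_nonpos_of_nonneg (not_lt.1 hcy) (mul_self_nonneg x)]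

theorem mul_abs_add_mul_abs_eq_zero {x y : α} (h : x * y ≤ 0) : x * |y| + y * |x| = 0 := by
  rcases abs_cases x with ⟨hx, hx'⟩ | ⟨hx, hx'⟩ <;>
    rcases abs_cases y with ⟨hy, hy'⟩ | ⟨hy, hy'⟩ <;> rw [hx, hy] <;> nlinarith

theorem ite_mul_abs_add_ite_mul_abs_eq_zero {x y cx cy : α} (hx : cx * x ≤ 0) (hy : cy * y ≤ 0)
    (hx' : x ≠ 0 → cx ≠ 0) (hy' : y ≠ 0 → cy ≠ 0) :
    (if 0 < cx * y then x * |y| else 0) + (if 0 < cy * x then y * |x| else 0) = 0 := by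
  rcases eq_or_ne x 0 with rfl | hx0
  · simp
  rcases eq_or_ne y 0 with rfl | hy0
  · simp
  simp only [mul_pos_iff_of_mul_neg (hx.lt_of_ne (mul_ne_zero (hx' hx0) hx0)),
    mul_pos_iff_of_mul_neg (hy.lt_of_ne (mul_ne_zero (hy' hy0) hy0)), mul_comm y x]
  split_ifs with hxy
  · exact mul_abs_add_mul_abs_eq_zero hxy.le
  · exact add_zero 0

end Signs

theorem sum_range_eq_zero_of_add_reflect_eq_zero {M : Type*} [AddCommGroup M] [IsAddTorsionFree M]
    (f : ℕ → M) (m : ℕ) (h : ∀ k < m, f k + f (m - 1 - k) = 0) : ∑ k ∈ range m, f k = 0 := by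
  have h2 : 2 • ∑ k ∈ range m, f k = 2 • 0 := by
    rw [two_nsmul]
    nth_rewrite 2 [← sum_range_reflect]
    rw [← sum_add_distrib, smul_zero]
    exact sum_eq_zero fun k hk => h k (mem_range.1 hk)
  exact nsmul_right_injective two_ne_zero h2

theorem sum_range_succ_sub_sub {M : Type*} [AddCommMonoid M] (f : ℕ → ℕ → M) (m i j : ℕ) :
    ∑ k ∈ range (m + 1), f (i + 1 - k) (j + 1 - k) =
      ∑ k ∈ range m, f (i - k) (j - k) + f (i + 1) (j + 1) := by
  rw [sum_range_succ']
  simp only [Nat.add_sub_add_right, Nat.sub_zero]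

section Period

variable {n : ℕ} {b : ℕ → ℕ → ℤ}

theorem eps_zero_left (h00 : b 0 0 = 0) (j : ℕ) : eps b 0 j = 0 := by
  simp [eps, h00]

theorem eps_zero_right (h00 : b 0 0 = 0) (i : ℕ) : eps b i 0 = 0 := by
  simp [eps, h00]

theorem eps_self (i : ℕ) : eps b i i = 0 :=
  if_neg (not_lt.2 (mul_self_nonneg _))

theorem sum_eps_last_col_eq_zero (h00 : b 0 0 = 0) (hmut : ∀ i < n, b i 0 ≠ 0 → b 0 i ≠ 0)
    (hmutual : ∀ i < n, b 0 i * b i 0 ≤ 0) {i : ℕ} (hi : i + 1 < n)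
    (hrel : ∀ k, 1 ≤ k → k ≤ i → b k 0 = -b 0 (n - k)) :
    ∑ k ∈ range (i + 1), eps b (i - k) (n - 1 - k) = 0 := by
  rw [sum_range_succ, Nat.sub_self, eps_zero_left h00, add_zero]
  refine sum_range_eq_zero_of_add_reflect_eq_zero _ _ fun k hk => ?_
  have hrel' : ∀ m, 1 ≤ m → m ≤ i → b 0 (n - m) = -b m 0 := fun m h1 h2 => by
    rw [hrel m h1 h2, neg_neg]
  rw [show i - (i - 1 - k) = k + 1 by omega, show n - 1 - (i - 1 - k) = n - (i - k) by omega,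
    show n - 1 - k = n - (k + 1) by omega]
  simp only [eps, hrel' (k + 1) (by omega) (by omega), hrel' (i - k) (by omega) (by omega),
    mul_neg, neg_lt_zero, abs_neg]
  exact ite_mul_abs_add_ite_mul_abs_eq_zero (hmutual _ (by omega)) (hmutual _ (by omega))
    (hmut _ (by omega)) (hmut _ (by omega))

theorem sum_eps_last_row_eq_zero (h00 : b 0 0 = 0) (hmutual : ∀ i < n, b 0 i * b i 0 ≤ 0)
    (hconv : ∀ k, 1 ≤ k → k ≤ n - 1 → b 0 k ≠ 0 → b k 0 ≠ 0) {i : ℕ} (hi : i + 1 < n)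
    (hrel : ∀ k, 1 ≤ k → k ≤ n - 1 → b k 0 = -b 0 (n - k)) :
    ∑ k ∈ range (i + 1), eps b (n - 1 - k) (i - k) = 0 := by
  rw [sum_range_succ, Nat.sub_self, eps_zero_right h00, add_zero]
  refine sum_range_eq_zero_of_add_reflect_eq_zero _ _ fun k hk => ?_
  have hrow : ∀ m, 1 ≤ m → m ≤ i → b 0 (n - m) = -b m 0 := fun m h1 h2 => by
    rw [hrel m h1 (by omega), neg_neg]
  have hcol : ∀ m, 1 ≤ m → m ≤ i → b (n - m) 0 = -b 0 m := fun m h1 h2 => by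
    rw [hrel (n - m) (by omega) (by omega), Nat.sub_sub_self (by omega)]
  rw [show i - (i - 1 - k) = k + 1 by omega, show n - 1 - (i - 1 - k) = n - (i - k) by omega,
    show n - 1 - k = n - (k + 1) by omega]
  simp only [eps, hrow (k + 1) (by omega) (by omega), hrow (i - k) (by omega) (by omega),
    hcol (k + 1) (by omega) (by omega), hcol (i - k) (by omega) (by omega),
    neg_mul, neg_lt_zero]
  -- the same cancellation as for the last column, with the roles of row and column `0` swapped
  have hpair := ite_mul_abs_add_ite_mul_abs_eq_zero
    (cx := b (i - k) 0) (cy := b (k + 1) 0) (x := b 0 (i - k)) (y := b 0 (k + 1))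
    (by rw [mul_comm]; exact hmutual _ (by omega)) (by rw [mul_comm]; exact hmutual _ (by omega))
    (hconv _ (by omega) (by omega)) (hconv _ (by omega) (by omega))
  rw [mul_comm (b (k + 1) 0), mul_comm (b (i - k) 0)]
  split_ifs at hpair ⊢ <;> linarith

namespace PeriodOneEqs

theorem telescope (h : PeriodOneEqs n b) {m i j : ℕ} (hmi : m ≤ i) (hmj : m ≤ j)
    (hi : i ≤ n - 1) (hj : j ≤ n - 1) :
    b i j + ∑ k ∈ range m, eps b (i - k) (j - k) = b (i - m) (j - m) := by
  induction m with
  | zero => simp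
  | succ m ih =>
    have step := h.2.2 (i - (m + 1)) (by omega) (j - (m + 1)) (by omega)
    rw [show i - (m + 1) + 1 = i - m by omega, show j - (m + 1) + 1 = j - m by omega] at step
    rw [sum_range_succ, step, ← ih (by omega) (by omega)]
    ring

theorem upper_formula (h : PeriodOneEqs n b) (h00 : b 0 0 = 0) {i j : ℕ} (hij : i ≤ j)
    (hj : j ≤ n - 1) :
    b i j = -(∑ k ∈ range (i + 1), eps b (i - k) (j - k)) + b 0 (j - i) := by
  have htel := h.telescope (m := i) le_rfl hij (by omega) hj
  rw [Nat.sub_self] at htel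
  rw [sum_range_succ, Nat.sub_self, eps_zero_left h00, ← htel]
  ring

theorem lower_formula (h : PeriodOneEqs n b) (h00 : b 0 0 = 0) {i j : ℕ} (hji : j ≤ i)
    (hi : i ≤ n - 1) :
    b i j = -(∑ k ∈ range (j + 1), eps b (i - k) (j - k)) + b (i - j) 0 := by
  have htel := h.telescope (m := j) hji le_rfl hi (by omega)
  rw [Nat.sub_self] at htel
  rw [sum_range_succ, Nat.sub_self, eps_zero_right h00, ← htel]
  ring

theorem col_zero_eq_neg_row_zero (h : PeriodOneEqs n b) (h00 : b 0 0 = 0)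
    (hmut : ∀ i < n, b i 0 ≠ 0 → b 0 i ≠ 0) (hmutual : ∀ i < n, b 0 i * b i 0 ≤ 0) :
    ∀ k, 1 ≤ k → k ≤ n - 1 → b k 0 = -b 0 (n - k) := by
  intro k
  induction k using Nat.strong_induction_on with
  | _ k ih =>
    intro hk1 hkn
    obtain ⟨i, rfl⟩ : ∃ i, k = i + 1 := ⟨k - 1, by omega⟩
    have hlast := h.upper_formula h00 (i := i) (j := n - 1) (by omega) le_rfl
    rw [sum_eps_last_col_eq_zero h00 hmut hmutual (by omega)
      fun m hm1 hm2 => ih m (by omega) hm1 (by omega)] at hlast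
    rw [← neg_neg (b (i + 1) 0), ← h.2.1 i (by omega), hlast,
      show n - 1 - i = n - (i + 1) by omega, neg_zero, zero_add]

end PeriodOneEqs

theorem mul_neg_or_eq_zero_of_col_zero_eq (hmut : ∀ i < n, b i 0 ≠ 0 → b 0 i ≠ 0)
    (hmutual : ∀ i < n, b 0 i * b i 0 ≤ 0)
    (hrel : ∀ k, 1 ≤ k → k ≤ n - 1 → b k 0 = -b 0 (n - k)) :
    ∀ i, 1 ≤ i → i ≤ n - 1 → b 0 i * b i 0 < 0 ∨ (b 0 i = 0 ∧ b i 0 = 0) := by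
  intro i h1 h2
  by_cases hc : b 0 i = 0
  · exact Or.inr ⟨hc, not_imp_not.1 (hmut i (by omega)) hc⟩
  · have hsym : b (n - i) 0 ≠ 0 := by
      rw [hrel (n - i) (by omega) (by omega), Nat.sub_sub_self (by omega)]
      exact neg_ne_zero.2 hc
    have hr : b i 0 ≠ 0 := by
      rw [hrel i h1 h2]
      exact neg_ne_zero.2 (hmut _ (by omega) hsym)
    exact Or.inl ((hmutual i (by omega)).lt_of_ne (mul_ne_zero hc hr))

theorem upper_formula_of_pos (h00 : b 0 0 = 0) (hdiag : ∀ i < n, b i i = 0)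
    (h3 : ∀ i j, 0 < i → i < j → j ≤ n - 1 →
      b i j = -(∑ k ∈ range (i + 1), eps b (i - k) (j - k)) + b 0 (j - i))
    {i j : ℕ} (hij : i ≤ j) (hj : j ≤ n - 1) :
    b i j = -(∑ k ∈ range (i + 1), eps b (i - k) (j - k)) + b 0 (j - i) := by
  rcases Nat.eq_zero_or_pos i with rfl | hi
  · simp [eps_zero_left h00]
  rcases hij.eq_or_lt with rfl | hij
  · simp [eps_self, hdiag i (by omega), h00]
  exact h3 i j hi hij hj

theorem lower_formula_of_pos (h00 : b 0 0 = 0)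
    (h2 : ∀ i, 1 ≤ i → i ≤ n - 1 → b i 0 = -b 0 (n - i))
    (h4 : ∀ i j, 0 < j → j < i → i ≤ n - 1 →
      b i j = -(∑ k ∈ range (j + 1), eps b (i - k) (j - k)) - b 0 (n - i + j))
    {i j : ℕ} (hji : j < i) (hi : i ≤ n - 1) :
    b i j = -(∑ k ∈ range (j + 1), eps b (i - k) (j - k)) - b 0 (n - i + j) := by
  rcases Nat.eq_zero_or_pos j with rfl | hj
  · simp [eps_zero_right h00, h2 i (by omega) hi]
  exact h4 i j hj hji hi

theorem PeriodOneEqs.of_formulas (hn : 2 ≤ n) (hdiag : ∀ i < n, b i i = 0)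
    (hmut : ∀ i < n, b i 0 ≠ 0 → b 0 i ≠ 0) (hmutual : ∀ i < n, b 0 i * b i 0 ≤ 0)
    (h1 : ∀ i, 1 ≤ i → i ≤ n - 1 → (b 0 i * b i 0 < 0 ∨ (b 0 i = 0 ∧ b i 0 = 0)))
    (h2 : ∀ i, 1 ≤ i → i ≤ n - 1 → b i 0 = -b 0 (n - i))
    (h3 : ∀ i j, 0 < i → i < j → j ≤ n - 1 →
      b i j = -(∑ k ∈ range (i + 1), eps b (i - k) (j - k)) + b 0 (j - i))
    (h4 : ∀ i j, 0 < j → j < i → i ≤ n - 1 →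
      b i j = -(∑ k ∈ range (j + 1), eps b (i - k) (j - k)) - b 0 (n - i + j)) :
    PeriodOneEqs n b := by
  have h00 : b 0 0 = 0 := hdiag 0 (by omega)
  have hconv : ∀ k, 1 ≤ k → k ≤ n - 1 → b 0 k ≠ 0 → b k 0 ≠ 0 := fun k hk1 hk2 hc hr =>
    (h1 k hk1 hk2).elim (fun hneg => by simp [hr] at hneg) (fun hz => hc hz.1)
  refine ⟨fun i hi => ?_, fun i hi => ?_, fun i hi j hj => ?_⟩
  · rw [lower_formula_of_pos h00 h2 h4 (by omega : i < n - 1) le_rfl,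
      sum_eps_last_row_eq_zero h00 hmutual hconv (by omega) h2,
      show n - (n - 1) + i = i + 1 by omega]
    ring
  · rw [upper_formula_of_pos h00 hdiag h3 (by omega : i ≤ n - 1) le_rfl,
      sum_eps_last_col_eq_zero h00 hmut hmutual (by omega) fun k hk1 hk2 => h2 k hk1 (by omega),
      h2 (i + 1) (by omega) (by omega), show n - 1 - i = n - (i + 1) by omega]
    ring
  · rcases le_or_gt i j with hij | hji
    · rw [upper_formula_of_pos h00 hdiag h3 (by omega : i + 1 ≤ j + 1) (by omega),
        sum_range_succ_sub_sub, Nat.add_sub_add_right,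
        upper_formula_of_pos h00 hdiag h3 hij (by omega)]
      ring
    · rw [lower_formula_of_pos h00 h2 h4 (by omega : j + 1 < i + 1) (by omega),
        sum_range_succ_sub_sub, show n - (i + 1) + (j + 1) = n - i + j by omega,
        lower_formula_of_pos h00 h2 h4 hji (by omega)]
      ring

end Period

/-- Theorem 4.10 of the paper: classification of period 1 mutual double quivers. -/
theorem stmt2 (n : ℕ) (hn : 2 ≤ n) (b : ℕ → ℕ → ℤ)
    (hdiag : ∀ i < n, b i i = 0)
    (hmut : ∀ i < n, b i 0 ≠ 0 → b 0 i ≠ 0)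
    (hmutual : ∀ i < n, b 0 i * b i 0 ≤ 0) :
    PeriodOneEqs n b ↔
      ((∀ i, 1 ≤ i → i ≤ n - 1 →
          (b 0 i * b i 0 < 0 ∨ (b 0 i = 0 ∧ b i 0 = 0))) ∧
       (∀ i, 1 ≤ i → i ≤ n - 1 → b i 0 = -b 0 (n - i)) ∧
       (∀ i j, 0 < i → i < j → j ≤ n - 1 →
          b i j = -(∑ k ∈ Finset.range (i + 1), eps b (i - k) (j - k)) + b 0 (j - i)) ∧
       (∀ i j, 0 < j → j < i → i ≤ n - 1 →
          b i j = -(∑ k ∈ Finset.range (j + 1), eps b (i - k) (j - k)) - b 0 (n - i + j))) := by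
  have h00 : b 0 0 = 0 := hdiag 0 (by omega)
  constructor
  · intro h
    have hrel := h.col_zero_eq_neg_row_zero h00 hmut hmutual
    refine ⟨mul_neg_or_eq_zero_of_col_zero_eq hmut hmutual hrel, hrel,
      fun i j _ hij hj => h.upper_formula h00 hij.le hj, fun i j _ hji hi => ?_⟩
    rw [h.lower_formula h00 hji.le hi, hrel (i - j) (by omega) (by omega),
      show n - (i - j) = n - i + j by omega]
    ring
  · rintro ⟨h1, h2, h3, h4⟩
    exact PeriodOneEqs.of_formulas hn hdiag hmut hmutual h1 h2 h3 h4
end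

section
/- Let n ≥ 2 and let B = (b_{i,j})_{0≤i,j≤n−1} be an n×n integer matrix with zero diagonal such that vertex 0 is mutable (b_{i,0} ≠ 0 implies b_{0,i} ≠ 0 for all i), B is mutual at vertex 0 (b_{0,i}·b_{i,0} ≤ 0 for all i), and B satisfies the period-1 equations. Then for every 1 ≤ i ≤ n−1 one has b_{0,i} = −b_{n−i,0} and b_{i,0} = −b_{0,n−i}. -/
/-!
Strong induction on `k`. Telescoping `b i j = b (i+1) (j+1) + ε (i+1) (j+1)` along the diagonal
from `(0, n-k)` to `(k-1, n-1)`, and closing with the boundary equation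
`b (k-1) (n-1) = -b k 0`, gives `b 0 (n-k) = -b k 0 + ∑ ε`; symmetrically for `b (n-k) 0`.
The `ε` terms cancel in pairs `u ↔ k - u`: by the induction hypothesis the relevant entries
`b 0 (n-u)` are `-b u 0`, and mutability together with mutuality forces `b u 0` and `b 0 u`
to have opposite signs (or both vanish), which makes `ε` antisymmetric under the swap.
-/

open Finset

theorem Finset.sum_range_eq_zero_of_add_reflect {M : Type*} [AddCommMonoid M] [IsAddTorsionFree M]
    (f : ℕ → M) (p : ℕ) (h : ∀ m < p, f m + f (p - 1 - m) = 0) : ∑ m ∈ range p, f m = 0 := by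
  rw [← two_nsmul_eq_zero, two_nsmul]
  nth_rewrite 2 [← sum_range_reflect]
  rw [← sum_add_distrib]
  exact sum_eq_zero fun m hm => h m (mem_range.1 hm)

section SignLemmas

variable {R : Type*} [CommRing R] [LinearOrder R] [IsStrictOrderedRing R]

theorem mul_abs_add_mul_abs_of_mul_neg {a b : R} (h : a * b < 0) : a * |b| + b * |a| = 0 := by
  rcases mul_neg_iff.1 h with ⟨ha, hb⟩ | ⟨ha, hb⟩
  · rw [abs_of_neg hb, abs_of_pos ha]; ring
  · rw [abs_of_pos hb, abs_of_neg ha]; ring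

theorem mul_neg_iff_of_sign_mul_eq {a b c d : R}
    (h : SignType.sign a * SignType.sign b = SignType.sign c * SignType.sign d) :
    a * b < 0 ↔ c * d < 0 := by
  rw [← sign_eq_neg_one_iff, sign_mul, h, ← sign_mul, sign_eq_neg_one_iff]

theorem sign_eq_neg_sign_of_mul_nonpos {a b : R} (h : a * b ≤ 0) (h0 : a = 0 ↔ b = 0) :
    SignType.sign b = -SignType.sign a := by
  rcases lt_trichotomy a 0 with ha | ha | ha
  · rcases lt_or_gt_of_ne (h0.not.1 ha.ne) with hb | hb
    · exact absurd (mul_pos_of_neg_of_neg ha hb) h.not_gt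
    · rw [sign_neg ha, sign_pos hb]; rfl
  · simp [ha, h0.1 ha]
  · rcases lt_or_gt_of_ne (h0.not.1 ha.ne') with hb | hb
    · rw [sign_pos ha, sign_neg hb]
    · exact absurd (mul_pos ha hb) h.not_gt

end SignLemmas

section PeriodOne

variable {n : ℕ} {b : ℕ → ℕ → ℤ}

theorem eps_add_eps_eq_zero {u s v w : ℕ}
    (hu : SignType.sign (b u 0) = -SignType.sign (b 0 u))
    (hs : SignType.sign (b s 0) = -SignType.sign (b 0 s))
    (hv : b 0 v = -b s 0) (hw : b 0 w = -b u 0) :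
    eps b u v + eps b s w = 0 := by
  have hcond₁ : b 0 u * -b s 0 < 0 ↔ b u 0 * b s 0 < 0 :=
    mul_neg_iff_of_sign_mul_eq (by rw [Left.sign_neg, hu, hs, neg_mul_neg, neg_neg])
  have hcond₂ : b 0 s * -b u 0 < 0 ↔ b u 0 * b s 0 < 0 :=
    mul_neg_iff_of_sign_mul_eq (by rw [Left.sign_neg, hu, hs, neg_mul_neg, neg_neg, mul_comm])
  unfold eps
  rw [hv, hw]
  by_cases h : b u 0 * b s 0 < 0
  · rw [if_pos (hcond₁.2 h), if_pos (hcond₂.2 h), abs_neg, abs_neg]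
    exact mul_abs_add_mul_abs_of_mul_neg h
  · rw [if_neg (mt hcond₁.1 h), if_neg (mt hcond₂.1 h), add_zero]

theorem eps_add_eps_eq_zero' {u s v w : ℕ}
    (hu : SignType.sign (b u 0) = -SignType.sign (b 0 u))
    (hs : SignType.sign (b s 0) = -SignType.sign (b 0 s))
    (hv : b 0 v = -b s 0) (hw : b 0 w = -b u 0) (hv' : b v 0 = -b 0 s) (hw' : b w 0 = -b 0 u) :
    eps b v u + eps b w s = 0 := by
  have hcond₁ : -b s 0 * b 0 u < 0 ↔ b 0 u * b 0 s < 0 :=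
    mul_neg_iff_of_sign_mul_eq (by rw [Left.sign_neg, hs, neg_neg, mul_comm])
  have hcond₂ : -b u 0 * b 0 s < 0 ↔ b 0 u * b 0 s < 0 :=
    mul_neg_iff_of_sign_mul_eq (by rw [Left.sign_neg, hu, neg_neg])
  unfold eps
  rw [hv, hw, hv', hw']
  by_cases h : b 0 u * b 0 s < 0
  · rw [if_pos (hcond₁.2 h), if_pos (hcond₂.2 h)]
    linear_combination -mul_abs_add_mul_abs_of_mul_neg h
  · rw [if_neg (mt hcond₁.1 h), if_neg (mt hcond₂.1 h), add_zero]

theorem PeriodOneEqs.eq_add_sum_eps (h : PeriodOneEqs n b) {i j t : ℕ}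
    (hi : i + t ≤ n - 1) (hj : j + t ≤ n - 1) :
    b i j = b (i + t) (j + t) + ∑ m ∈ range t, eps b (i + m + 1) (j + m + 1) := by
  induction t with
  | zero => simp
  | succ t ih =>
    rw [ih (by omega) (by omega), h.2.2 (i + t) (by omega) (j + t) (by omega), sum_range_succ,
      ← add_assoc i, ← add_assoc j]
    abel

theorem PeriodOneEqs.antidiagonal_of_forall_lt (h : PeriodOneEqs n b)
    (hmut : ∀ i < n, b i 0 ≠ 0 → b 0 i ≠ 0) (hmutual : ∀ i < n, b 0 i * b i 0 ≤ 0)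
    {k : ℕ} (hk₁ : 1 ≤ k) (hk : k ≤ n - 1)
    (ih : ∀ u, 1 ≤ u → u < k → b 0 (n - u) = -b u 0 ∧ b (n - u) 0 = -b 0 u) :
    b 0 (n - k) = -b k 0 ∧ b (n - k) 0 = -b 0 k := by
  have hsign : ∀ u, 1 ≤ u → u < k → SignType.sign (b u 0) = -SignType.sign (b 0 u) := by
    intro u hu₁ hu
    obtain ⟨hrow, hcol⟩ := ih u hu₁ hu
    refine sign_eq_neg_sign_of_mul_nonpos (hmutual u (by omega))
      ⟨not_imp_not.1 (hmut u (by omega)), fun h0 => ?_⟩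
    have : b (n - u) 0 = 0 := not_imp_not.1 (hmut (n - u) (by omega)) (by rw [hrow, h0, neg_zero])
    rwa [hcol, neg_eq_zero] at this
  have hindex : ∀ m < k - 1, n - k + m + 1 = n - (k - 1 - m) ∧
      k - 1 - 1 - m + 1 = k - 1 - m ∧ n - k + (k - 1 - 1 - m) + 1 = n - (m + 1) :=
    fun m hm => by omega
  have hrowsum : ∑ m ∈ range (k - 1), eps b (m + 1) (n - k + m + 1) = 0 := by
    refine sum_range_eq_zero_of_add_reflect _ _ fun m hm => ?_
    obtain ⟨e₁, e₂, e₃⟩ := hindex m hm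
    rw [e₁, e₂, e₃]
    exact eps_add_eps_eq_zero (hsign _ (by omega) (by omega)) (hsign _ (by omega) (by omega))
      (ih _ (by omega) (by omega)).1 (ih _ (by omega) (by omega)).1
  have hcolsum : ∑ m ∈ range (k - 1), eps b (n - k + m + 1) (m + 1) = 0 := by
    refine sum_range_eq_zero_of_add_reflect _ _ fun m hm => ?_
    obtain ⟨e₁, e₂, e₃⟩ := hindex m hm
    rw [e₁, e₂, e₃]
    exact eps_add_eps_eq_zero' (hsign _ (by omega) (by omega)) (hsign _ (by omega) (by omega))
      (ih _ (by omega) (by omega)).1 (ih _ (by omega) (by omega)).1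
      (ih _ (by omega) (by omega)).2 (ih _ (by omega) (by omega)).2
  have hrow := h.eq_add_sum_eps (i := 0) (j := n - k) (t := k - 1) (by omega) (by omega)
  have hcol := h.eq_add_sum_eps (i := n - k) (j := 0) (t := k - 1) (by omega) (by omega)
  have e : n - k + (k - 1) = n - 1 := by omega
  simp only [zero_add] at hrow hcol
  rw [hrowsum, add_zero, e, h.2.1 (k - 1) (by omega), Nat.sub_add_cancel hk₁] at hrow
  rw [hcolsum, add_zero, e, h.1 (k - 1) (by omega), Nat.sub_add_cancel hk₁] at hcol
  exact ⟨hrow, hcol⟩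

theorem PeriodOneEqs.antidiagonal (h : PeriodOneEqs n b)
    (hmut : ∀ i < n, b i 0 ≠ 0 → b 0 i ≠ 0) (hmutual : ∀ i < n, b 0 i * b i 0 ≤ 0) {k : ℕ}
    (hk₁ : 1 ≤ k) (hk : k ≤ n - 1) : b 0 (n - k) = -b k 0 ∧ b (n - k) 0 = -b 0 k := by
  induction k using Nat.strong_induction_on with
  | _ k ih =>
    exact h.antidiagonal_of_forall_lt hmut hmutual hk₁ hk fun u hu₁ hu => ih u hu hu₁ (by omega)

end PeriodOne

theorem stmt3_general (n : ℕ) (b : ℕ → ℕ → ℤ)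
    (hmut : ∀ i < n, b i 0 ≠ 0 → b 0 i ≠ 0)
    (hmutual : ∀ i < n, b 0 i * b i 0 ≤ 0)
    (hper : PeriodOneEqs n b) :
    ∀ i, 1 ≤ i → i ≤ n - 1 → b 0 i = -b (n - i) 0 ∧ b i 0 = -b 0 (n - i) := by
  intro i hi₁ hi
  have h := hper.antidiagonal hmut hmutual (k := n - i) (by omega) (by omega)
  rwa [Nat.sub_sub_self (by omega)] at h

/-- The key intermediate identity (equation (ex3)) in the proof of the classification
of period 1 mutual double quivers: `b_{0,i} = −b_{n−i,0}` and `b_{i,0} = −b_{0,n−i}`. -/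
theorem stmt3 (n : ℕ) (hn : 2 ≤ n) (b : ℕ → ℕ → ℤ)
    (hdiag : ∀ i < n, b i i = 0)
    (hmut : ∀ i < n, b i 0 ≠ 0 → b 0 i ≠ 0)
    (hmutual : ∀ i < n, b 0 i * b i 0 ≤ 0)
    (hper : PeriodOneEqs n b) :
    ∀ i, 1 ≤ i → i ≤ n - 1 → b 0 i = -b (n - i) 0 ∧ b i 0 = -b 0 (n - i) :=
  stmt3_general n b hmut hmutual hper
end

section
/- Fix n ≥ 2 and nonnegative integers a_1, …, a_{n−1} such that a_i = 0 if and only if a_{n−i} = 0, for all 1 ≤ i ≤ n−1. Suppose the polynomial P = x_1^{a_1}·x_2^{a_2}⋯x_{n−1}^{a_{n−1}} + 1 is irreducible in ℤ[x_1,…,x_{n−1}]. Then every term of any sequence x : ℕ → F generated by P is a Laurent polynomial. -/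
/-!
Write `A_i = ∏_{t=1}^{n-1} x_{i+t}^{a_t}`, so that the recurrence reads `x_i x_{i+n} = A_i + 1`.
By induction every term lies in the Laurent ring `S`; the terms `x_n, …, x_{2n-1}` are handled by
dividing by the unit `x_{i}`, `i < n`. For `k = j + 2n` it suffices that `π = x_{j+n}` divides
`A_{j+n} + 1` in `S`. Modulo `π` we have `A_j ≡ -1` (from `x_j x_{j+n} = A_j + 1`), and for every
`t` with `a_t ≠ 0` the monomial `A_{j+t}` contains `x_{j+n}^{a_{n-t}}` with `a_{n-t} ≠ 0`, so
`x_{j+t} x_{j+n+t} ≡ 1`. Multiplying these gives `A_j A_{j+n} ≡ 1`, hence `A_{j+n} ≡ -1`.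
-/

open MvPolynomial Finset

section ExchangeMonomial

variable {R : Type*} [CommRing R] {n : ℕ} {a : ℕ → ℕ}

def exchangeMonomial (n : ℕ) (a : ℕ → ℕ) (y : ℕ → R) (i : ℕ) : R :=
  ∏ t ∈ Icc 1 (n - 1), y (i + t) ^ a t

theorem exchangeMonomial_congr {y z : ℕ → R} {i : ℕ}
    (h : ∀ t ∈ Icc 1 (n - 1), y (i + t) = z (i + t)) :
    exchangeMonomial n a y i = exchangeMonomial n a z i :=
  prod_congr rfl fun t ht => by rw [h t ht]

theorem map_exchangeMonomial {S : Type*} [CommRing S] (f : R →+* S) (y : ℕ → R) (i : ℕ) :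
    f (exchangeMonomial n a y i) = exchangeMonomial n a (f ∘ y) i := by
  simp only [exchangeMonomial, map_prod, map_pow, Function.comp_apply]

theorem exchangeMonomial_add_one_eq_zero (hn : 0 < n)
    (ha : ∀ t ∈ Icc 1 (n - 1), a t ≠ 0 → a (n - t) ≠ 0) {y : ℕ → R} {j : ℕ}
    (hrec : ∀ i < j + n, y i * y (i + n) = exchangeMonomial n a y i + 1)
    (hy : y (j + n) = 0) :
    exchangeMonomial n a y (j + n) + 1 = 0 := by
  have hA : exchangeMonomial n a y j + 1 = 0 := by
    rw [← hrec j (by omega), hy, mul_zero]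
  have hpair : ∀ t ∈ Icc 1 (n - 1), a t ≠ 0 → y (j + t) * y (j + n + t) = 1 := by
    intro t ht hat
    have ht' := mem_Icc.mp ht
    have hzero : exchangeMonomial n a y (j + t) = 0 := by
      refine prod_eq_zero (i := n - t) (mem_Icc.mpr ⟨by omega, by omega⟩) ?_
      rw [show j + t + (n - t) = j + n by omega, hy, zero_pow (ha t ht hat)]
    rw [show j + n + t = j + t + n by omega, hrec (j + t) (by omega), hzero, zero_add]
  have hprod : exchangeMonomial n a y j * exchangeMonomial n a y (j + n) = 1 := by
    rw [exchangeMonomial, exchangeMonomial, ← prod_mul_distrib]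
    refine prod_eq_one fun t ht => ?_
    rw [← mul_pow]
    by_cases hat : a t = 0
    · rw [hat, pow_zero]
    · rw [hpair t ht hat, one_pow]
  linear_combination exchangeMonomial n a y (j + n) * hA - hprod

theorem dvd_exchangeMonomial_add_one (hn : 0 < n)
    (ha : ∀ t ∈ Icc 1 (n - 1), a t ≠ 0 → a (n - t) ≠ 0) {y : ℕ → R} {j : ℕ}
    (hrec : ∀ i < j + n, y i * y (i + n) = exchangeMonomial n a y i + 1) :
    y (j + n) ∣ exchangeMonomial n a y (j + n) + 1 := by
  let f := Ideal.Quotient.mk (Ideal.span {y (j + n)})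
  have hfrec : ∀ i < j + n, (f ∘ y) i * (f ∘ y) (i + n) = exchangeMonomial n a (f ∘ y) i + 1 :=
    fun i hi => by simp only [Function.comp_apply, ← map_mul, hrec i hi, ← map_exchangeMonomial,
      map_add, map_one]
  have hfy : (f ∘ y) (j + n) = 0 := Ideal.Quotient.mk_singleton_self _
  rw [← Ideal.Quotient.eq_zero_iff_dvd, map_add, map_one, map_exchangeMonomial]
  exact exchangeMonomial_add_one_eq_zero hn ha hfrec hfy

end ExchangeMonomial

section Laurent

variable {K : Type*} {n : ℕ} {a : ℕ → ℕ} {x : ℕ → K}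

theorem exists_mem_exchangeMonomial_add_one_eq_mul [CommRing K] (S : Subring K) (hn : 0 < n)
    (ha : ∀ t ∈ Icc 1 (n - 1), a t ≠ 0 → a (n - t) ≠ 0)
    (hrec : ∀ m, x m * x (m + n) = exchangeMonomial n a x m + 1) {j : ℕ}
    (hS : ∀ i < j + 2 * n, x i ∈ S) :
    ∃ c ∈ S, exchangeMonomial n a x (j + n) + 1 = x (j + n) * c := by
  classical
  let y : ℕ → S := fun i => if h : x i ∈ S then ⟨x i, h⟩ else 0
  have hy : ∀ i < j + 2 * n, S.subtype (y i) = x i := fun i hi => by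
    simp only [y, dif_pos (hS i hi), Subring.subtype_apply]
  have hmono : ∀ i < j + n, exchangeMonomial n a x i = exchangeMonomial n a (S.subtype ∘ y) i :=
    fun i hi => exchangeMonomial_congr fun t ht => by
      have := mem_Icc.mp ht
      rw [Function.comp_apply, hy (i + t) (by omega)]
  have hyrec : ∀ i < j + n, y i * y (i + n) = exchangeMonomial n a y i + 1 := fun i hi =>
    S.subtype_injective <| by
      rw [map_mul, map_add, map_one, map_exchangeMonomial, hy i (by omega), hy (i + n) (by omega),
        hrec i, hmono i hi]
  obtain ⟨c, hc⟩ := dvd_exchangeMonomial_add_one hn ha hyrec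
  refine ⟨c, c.2, ?_⟩
  have hmono' : exchangeMonomial n a x (j + n) = exchangeMonomial n a (S.subtype ∘ y) (j + n) :=
    exchangeMonomial_congr fun t ht => by
      have := mem_Icc.mp ht
      rw [Function.comp_apply, hy (j + n + t) (by omega)]
  have := congrArg S.subtype hc
  rwa [map_add, map_one, map_exchangeMonomial, ← hmono', map_mul, hy (j + n) (by omega)] at this

theorem mem_of_exchange_recurrence [Field K] (S : Subring K) (hn : 0 < n)
    (ha : ∀ t ∈ Icc 1 (n - 1), a t ≠ 0 → a (n - t) ≠ 0)
    (hrec : ∀ m, x m * x (m + n) = exchangeMonomial n a x m + 1) (hnz : ∀ m, x m ≠ 0)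
    (hinit : ∀ i < n, x i ∈ S) (hinv : ∀ i < n, (x i)⁻¹ ∈ S) (m : ℕ) : x m ∈ S := by
  induction m using Nat.strong_induction_on with
  | _ k IH =>
    have hnext : ∀ i, x (i + n) = (x i)⁻¹ * (exchangeMonomial n a x i + 1) := fun i => by
      rw [← hrec i, inv_mul_cancel_left₀ (hnz i)]
    have hmono : ∀ i, i + n ≤ k → exchangeMonomial n a x i ∈ S := fun i hi =>
      S.prod_mem fun t ht => S.pow_mem (IH _ (by have := mem_Icc.mp ht; omega)) _
    rcases lt_or_ge k n with hk | hk
    · exact hinit k hk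
    obtain ⟨i, rfl⟩ : ∃ i, k = i + n := ⟨k - n, by omega⟩
    rcases lt_or_ge i n with hi | hi
    · rw [hnext]
      exact S.mul_mem (hinv i hi) (S.add_mem (hmono i le_rfl) S.one_mem)
    obtain ⟨j, rfl⟩ : ∃ j, i = j + n := ⟨i - n, by omega⟩
    obtain ⟨c, hc, hjc⟩ := exists_mem_exchangeMonomial_add_one_eq_mul S hn ha hrec
      (j := j) fun i hi => IH i (by omega)
    rwa [mul_left_cancel₀ (hnz (j + n)) ((hrec (j + n)).trans hjc)]

end Laurent

theorem stmt4_general (n : ℕ) (hn : 2 ≤ n) (a : ℕ → ℕ)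
    (ha : ∀ i ∈ Finset.Icc 1 (n - 1), (a i = 0 ↔ a (n - i) = 0))
    (P : MvPolynomial ℕ ℤ)
    (hP : P = (∏ i ∈ Finset.Icc 1 (n - 1), X i ^ a i) + 1)
    (x : ℕ → FractionRing (MvPolynomial (Fin n) ℤ))
    (hinit : ∀ i : Fin n, x i =
      algebraMap (MvPolynomial (Fin n) ℤ) (FractionRing (MvPolynomial (Fin n) ℤ)) (X i))
    (hnz : ∀ m, x m ≠ 0)
    (hrec : ∀ m, x m * x (m + n) = aeval (fun i : ℕ => x (m + i)) P) :
    ∀ m, x m ∈ Subring.closure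
      ((Set.range fun i : Fin n =>
          algebraMap (MvPolynomial (Fin n) ℤ) (FractionRing (MvPolynomial (Fin n) ℤ)) (X i)) ∪
        (Set.range fun i : Fin n =>
          (algebraMap (MvPolynomial (Fin n) ℤ) (FractionRing (MvPolynomial (Fin n) ℤ)) (X i))⁻¹)) := by
  have hrec' : ∀ m, x m * x (m + n) = exchangeMonomial n a x m + 1 := fun m => by
    rw [hrec m, hP]
    simp only [exchangeMonomial, map_add, map_one, map_prod, map_pow, aeval_X]
  refine mem_of_exchange_recurrence _ (by omega) (fun t ht hat h => hat ((ha t ht).mpr h)) hrec'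
    hnz (fun i hi => ?_) (fun i hi => ?_)
  · rw [show i = ((⟨i, hi⟩ : Fin n) : ℕ) from rfl, hinit]
    exact Subring.subset_closure (Or.inl ⟨_, rfl⟩)
  · rw [show i = ((⟨i, hi⟩ : Fin n) : ℕ) from rfl, hinit]
    exact Subring.subset_closure (Or.inr ⟨_, rfl⟩)

/-- Sink-type binomial case (family (2) of Theorem 3.7 with Corollary 3.8):
if `P = x_1^{a_1}⋯x_{n-1}^{a_{n-1}} + 1` is irreducible and `a_i = 0 ↔ a_{n-i} = 0`,
then every term of any sequence generated by `P` is a Laurent polynomial in the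
initial variables. -/
theorem stmt4 (n : ℕ) (hn : 2 ≤ n) (a : ℕ → ℕ)
    (ha : ∀ i ∈ Finset.Icc 1 (n - 1), (a i = 0 ↔ a (n - i) = 0))
    (P : MvPolynomial ℕ ℤ)
    (hP : P = (∏ i ∈ Finset.Icc 1 (n - 1), X i ^ a i) + 1)
    (hirr : Irreducible P)
    (x : ℕ → FractionRing (MvPolynomial (Fin n) ℤ))
    (hinit : ∀ i : Fin n, x i =
      algebraMap (MvPolynomial (Fin n) ℤ) (FractionRing (MvPolynomial (Fin n) ℤ)) (X i))
    (hnz : ∀ m, x m ≠ 0)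
    (hrec : ∀ m, x m * x (m + n) = aeval (fun i : ℕ => x (m + i)) P) :
    ∀ m, x m ∈ Subring.closure
      ((Set.range fun i : Fin n =>
          algebraMap (MvPolynomial (Fin n) ℤ) (FractionRing (MvPolynomial (Fin n) ℤ)) (X i)) ∪
        (Set.range fun i : Fin n =>
          (algebraMap (MvPolynomial (Fin n) ℤ) (FractionRing (MvPolynomial (Fin n) ℤ)) (X i))⁻¹)) :=
  stmt4_general n hn a ha P hP x hinit hnz hrec
end

section
/- Fix n ≥ 2 and integers A, A_1, …, A_{n−1}. Suppose the polynomial P = ∑_{i=1}^{n−1} x_i² + A_1·E_1 + … + A_{n−1}·E_{n−1} + A, where E_k = ∑_{1≤i_1<…<i_k≤n−1} x_{i_1}⋯x_{i_k} is the k-th elementary symmetric polynomial in x_1,…,x_{n−1}, is irreducible in ℤ[x_1,…,x_{n−1}] and not divisible by any x_j. Then every term of any sequence x : ℕ → F generated by P is a Laurent polynomial. -/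
/-!
Write `Q(y) = ∑ yᵢ² + ∑ₖ Aₖ eₖ(y) + A` for a multiset `y` of any size, so that the recurrence
reads `x_m x_{m+n} = Q(x_{m+1}, …, x_{m+n-1})`. Adjoining one value gives
`Q(a, y) = Q(y) + a (a + L(y))` with `L(y) = ∑ₖ Aₖ e_{k-1}(y)`. Applied to the middle terms, this
shows that the windows `x_m, …, x_{m+n-1}` and `x_{m+1}, …, x_{m+n}` have `Q`-values `x_m W_m` and
`x_{m+n} W_m` for the same `W_m = x_m + x_{m+n} + L(x_{m+1}, …, x_{m+n-1})`. Hence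
`Q(window) / ∏ window` is an invariant `K` of the sequence, and
`x_{m+n} = K x_{m+1} ⋯ x_{m+n-1} - x_m - L(x_{m+1}, …, x_{m+n-1})` is a recurrence without
division. As `K = Q(x_0, …, x_{n-1}) / (x_0 ⋯ x_{n-1})` is a Laurent polynomial, induction finishes.
-/

open MvPolynomial

theorem Multiset.esymm_cons_succ {R : Type*} [CommRing R] (a : R) (y : Multiset R) (k : ℕ) :
    (a ::ₘ y).esymm (k + 1) = y.esymm (k + 1) + a * y.esymm k := by
  simp [Multiset.esymm, Multiset.powersetCard_cons, Multiset.sum_map_mul_left]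

theorem Multiset.esymm_mem {R : Type*} [CommRing R] {S : Subring R} {y : Multiset R}
    (hy : ∀ a ∈ y, a ∈ S) (k : ℕ) : y.esymm k ∈ S := by
  refine S.multiset_sum_mem _ fun b hb => ?_
  obtain ⟨t, ht, rfl⟩ := Multiset.mem_map.mp hb
  exact S.multiset_prod_mem _ fun a ha =>
    hy a (Multiset.mem_of_le (Multiset.mem_powersetCard.mp ht).1 ha)

theorem mul_eq_mul_of_recurrence {M : Type*} [CommMonoidWithZero M] [IsCancelMulZero M]
    {a b u v : ℕ → M}
    (hb : ∀ m, b m ≠ 0) (hu : ∀ m, a m * u m = b m * u (m + 1))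
    (hv : ∀ m, a m * v m = b m * v (m + 1)) (m : ℕ) : u m * v 0 = u 0 * v m := by
  induction m with
  | zero => rfl
  | succ m ih =>
    apply mul_left_cancel₀ (hb m)
    calc b m * (u (m + 1) * v 0) = a m * u m * v 0 := by rw [← mul_assoc, hu]
      _ = u 0 * (a m * v m) := by rw [mul_assoc, ih, mul_left_comm]
      _ = b m * (u 0 * v (m + 1)) := by rw [hv, mul_left_comm]

section SymmForm

variable {R : Type*} [CommRing R] (A : ℤ) (c : ℕ → ℤ) (d : ℕ)

def symmForm (y : Multiset R) : R :=
  (y.map (· ^ 2)).sum + ∑ k ∈ Finset.Icc 1 d, (c k : R) * y.esymm k + A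

def symmFormCoeff (y : Multiset R) : R :=
  ∑ k ∈ Finset.Icc 1 d, (c k : R) * y.esymm (k - 1)

theorem symmForm_cons (a : R) (y : Multiset R) :
    symmForm A c d (a ::ₘ y) = symmForm A c d y + a * (a + symmFormCoeff c d y) := by
  have hesymm : ∀ k ∈ Finset.Icc 1 d, (c k : R) * (a ::ₘ y).esymm k
      = (c k : R) * y.esymm k + a * ((c k : R) * y.esymm (k - 1)) := by
    intro k hk
    obtain ⟨j, rfl⟩ : ∃ j, k = j + 1 := ⟨k - 1, by grind⟩
    rw [Multiset.esymm_cons_succ, Nat.add_sub_cancel]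
    ring
  simp only [symmForm, symmFormCoeff, Multiset.map_cons, Multiset.sum_cons,
    Finset.sum_congr rfl hesymm, Finset.sum_add_distrib, ← Finset.mul_sum]
  ring

theorem symmForm_mem {S : Subring R} {y : Multiset R} (hy : ∀ a ∈ y, a ∈ S) :
    symmForm A c d y ∈ S := by
  refine S.add_mem (S.add_mem ?_ ?_) (intCast_mem S A)
  · refine S.multiset_sum_mem _ fun b hb => ?_
    obtain ⟨a, ha, rfl⟩ := Multiset.mem_map.mp hb
    exact S.pow_mem (hy a ha) 2
  · exact S.sum_mem fun k _ => S.mul_mem (intCast_mem S _) (Multiset.esymm_mem hy k)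

theorem symmFormCoeff_mem {S : Subring R} {y : Multiset R} (hy : ∀ a ∈ y, a ∈ S) :
    symmFormCoeff c d y ∈ S :=
  S.sum_mem fun _ _ => S.mul_mem (intCast_mem S _) (Multiset.esymm_mem hy _)

theorem aeval_eq_symmForm [Algebra ℤ R] (s : Finset ℕ) (f : ℕ → R) :
    aeval f (∑ i ∈ s, X i ^ 2 + ∑ k ∈ Finset.Icc 1 d, C (c k) *
        ∑ t ∈ s.powersetCard k, ∏ i ∈ t, X i + C A : MvPolynomial ℕ ℤ) =
      symmForm A c d (s.val.map f) := by
  simp [symmForm, Finset.esymm_map_val, Finset.sum_map_val]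

end SymmForm

section Window

variable {α : Type*} (x : ℕ → α) {a b : ℕ}

def window (a b : ℕ) : Multiset α := (Finset.Icc a b).val.map x

theorem window_eq_cons_left (h : a ≤ b) : window x a b = x a ::ₘ window x (a + 1) b := by
  rw [window, ← Finset.insert_Icc_add_one_left_eq_Icc h,
    Finset.insert_val_of_notMem (by simp), Multiset.map_cons, window]

theorem window_eq_cons_right (h : a ≤ b + 1) :
    window x a (b + 1) = x (b + 1) ::ₘ window x a b := by
  rw [window, ← Finset.insert_Icc_right_eq_Icc_add_one h,
    Finset.insert_val_of_notMem (by simp), Multiset.map_cons, window]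

theorem window_add_left (m : ℕ) :
    window x (m + a) (m + b) = (Finset.Icc a b).val.map fun i => x (m + i) := by
  rw [window, ← Finset.map_add_left_Icc, Finset.map_val, Multiset.map_map]
  rfl

theorem window_prod {M : Type*} [CommMonoid M] (x : ℕ → M) :
    (window x a b).prod = ∏ i ∈ Finset.Icc a b, x i :=
  rfl

theorem mem_window_of_mem {S : Set α} (hS : ∀ i ∈ Finset.Icc a b, x i ∈ S) :
    ∀ y ∈ window x a b, y ∈ S := by
  intro y hy
  obtain ⟨i, hi, rfl⟩ := Multiset.mem_map.mp hy
  exact hS i hi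

end Window

section Recurrence

def SymmFormRecurrence {R : Type*} [CommRing R] (A : ℤ) (c : ℕ → ℤ) (d : ℕ) (x : ℕ → R) : Prop :=
  ∀ m, x m * x (m + d + 1) = symmForm A c d (window x (m + 1) (m + d))

variable {K : Type*} [Field K] {A : ℤ} {c : ℕ → ℤ} {d : ℕ} {x : ℕ → K}

theorem symmForm_window_eq_mul_left (hrec : SymmFormRecurrence A c d x) (m : ℕ) :
    symmForm A c d (window x m (m + d)) =
      x m * (x m + x (m + d + 1) + symmFormCoeff c d (window x (m + 1) (m + d))) := by
  rw [window_eq_cons_left x (by omega), symmForm_cons, ← hrec m]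
  ring

theorem symmForm_window_eq_mul_right (hrec : SymmFormRecurrence A c d x) (m : ℕ) :
    symmForm A c d (window x (m + 1) (m + 1 + d)) =
      x (m + d + 1) * (x m + x (m + d + 1) + symmFormCoeff c d (window x (m + 1) (m + d))) := by
  rw [Nat.add_right_comm m 1 d, window_eq_cons_right x (by omega), symmForm_cons, ← hrec m]
  ring

theorem symmForm_window_mul_prod (hx : ∀ m, x m ≠ 0)
    (hrec : SymmFormRecurrence A c d x) (m : ℕ) :
    symmForm A c d (window x m (m + d)) * (window x 0 d).prod =
      symmForm A c d (window x 0 d) * (window x m (m + d)).prod := by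
  have step := mul_eq_mul_of_recurrence (a := fun m => x (m + d + 1))
    (u := fun m => symmForm A c d (window x m (m + d))) (v := fun m => (window x m (m + d)).prod)
    hx (fun m => ?_) (fun m => ?_) m
  · simpa only [zero_add] using step
  · rw [symmForm_window_eq_mul_left hrec, symmForm_window_eq_mul_right hrec]
    ring
  · rw [window_eq_cons_left x (by omega), Nat.add_right_comm m 1 d,
      window_eq_cons_right x (by omega), Multiset.prod_cons, Multiset.prod_cons]
    ring

theorem eq_symmForm_mul_prod_sub (hx : ∀ m, x m ≠ 0)
    (hrec : SymmFormRecurrence A c d x) (m : ℕ) :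
    x (m + d + 1) = symmForm A c d (window x 0 d) * ((window x 0 d).prod)⁻¹ *
      (window x (m + 1) (m + d)).prod - x m - symmFormCoeff c d (window x (m + 1) (m + d)) := by
  have hprod : (window x 0 d).prod ≠ 0 := by
    rw [window_prod]
    exact Finset.prod_ne_zero_iff.mpr fun i _ => hx i
  have key := symmForm_window_mul_prod hx hrec m
  rw [symmForm_window_eq_mul_left hrec, window_eq_cons_left x (a := m) (b := m + d) (by omega),
    Multiset.prod_cons, mul_assoc, mul_left_comm _ (x m)] at key
  have := mul_left_cancel₀ (hx m) key
  field_simp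
  linear_combination this

theorem mem_subring_of_recurrence (S : Subring K) (hx : ∀ m, x m ≠ 0)
    (hrec : SymmFormRecurrence A c d x) (hS : ∀ i ≤ d, x i ∈ S ∧ (x i)⁻¹ ∈ S) (m : ℕ) : x m ∈ S := by
  induction m using Nat.strong_induction_on with
  | _ m ih =>
    rcases le_or_gt m d with hm | hm
    · exact (hS m hm).1
    obtain ⟨m, rfl⟩ : ∃ k, m = k + d + 1 := ⟨m - d - 1, by omega⟩
    have hinit : ∀ y ∈ window x 0 d, y ∈ S :=
      mem_window_of_mem x fun i hi => (hS i (Finset.mem_Icc.mp hi).2).1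
    have hmid : ∀ y ∈ window x (m + 1) (m + d), y ∈ S :=
      mem_window_of_mem x fun i hi => ih i (by grind)
    rw [eq_symmForm_mul_prod_sub hx hrec, window_prod, ← Finset.prod_inv_distrib]
    refine S.sub_mem (S.sub_mem (S.mul_mem (S.mul_mem (symmForm_mem A c d hinit) ?_) ?_)
      (ih m (by omega))) (symmFormCoeff_mem c d hmid)
    · exact S.prod_mem fun i hi => (hS i (Finset.mem_Icc.mp hi).2).2
    · exact S.multiset_prod_mem _ hmid

end Recurrence

theorem stmt5_general (n : ℕ) (hn : 2 ≤ n) (A : ℤ) (Acoef : ℕ → ℤ)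
    (P : MvPolynomial ℕ ℤ)
    (hP : P = (∑ i ∈ Finset.Icc 1 (n - 1), X i ^ 2) +
        (∑ k ∈ Finset.Icc 1 (n - 1), C (Acoef k) *
          ∑ s ∈ Finset.powersetCard k (Finset.Icc 1 (n - 1)), ∏ i ∈ s, X i) +
        C A)
    (x : ℕ → FractionRing (MvPolynomial (Fin n) ℤ))
    (hinit : ∀ i : Fin n, x i =
      algebraMap (MvPolynomial (Fin n) ℤ) (FractionRing (MvPolynomial (Fin n) ℤ)) (X i))
    (hnz : ∀ m, x m ≠ 0)
    (hrec : ∀ m, x m * x (m + n) = aeval (fun i : ℕ => x (m + i)) P) :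
    ∀ m, x m ∈ Subring.closure
      ((Set.range fun i : Fin n =>
          algebraMap (MvPolynomial (Fin n) ℤ) (FractionRing (MvPolynomial (Fin n) ℤ)) (X i)) ∪
        (Set.range fun i : Fin n =>
          (algebraMap (MvPolynomial (Fin n) ℤ) (FractionRing (MvPolynomial (Fin n) ℤ)) (X i))⁻¹)) := by
  obtain ⟨d, rfl⟩ : ∃ d, n = d + 1 := ⟨n - 1, by omega⟩
  have hrec' : SymmFormRecurrence A Acoef d x := fun m => by
    rw [window_add_left, ← aeval_eq_symmForm, add_assoc, hrec, hP, Nat.add_sub_cancel]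
  refine mem_subring_of_recurrence _ hnz hrec' fun i hi => ⟨?_, ?_⟩ <;>
    apply Subring.subset_closure
  · exact Or.inl ⟨⟨i, by omega⟩, (hinit ⟨i, by omega⟩).symm⟩
  · exact Or.inr ⟨⟨i, by omega⟩, by rw [hinit ⟨i, by omega⟩]⟩

/-- Symmetric-with-second-powers case (family (1) of Theorem 3.7 with Corollary 3.8). -/
theorem stmt5 (n : ℕ) (hn : 2 ≤ n) (A : ℤ) (Acoef : ℕ → ℤ)
    (P : MvPolynomial ℕ ℤ)
    (hP : P = (∑ i ∈ Finset.Icc 1 (n - 1), X i ^ 2) +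
        (∑ k ∈ Finset.Icc 1 (n - 1), C (Acoef k) *
          ∑ s ∈ Finset.powersetCard k (Finset.Icc 1 (n - 1)), ∏ i ∈ s, X i) +
        C A)
    (hirr : Irreducible P)
    (hndvd : ∀ j ∈ Finset.Icc 1 (n - 1), ¬ X j ∣ P)
    (x : ℕ → FractionRing (MvPolynomial (Fin n) ℤ))
    (hinit : ∀ i : Fin n, x i =
      algebraMap (MvPolynomial (Fin n) ℤ) (FractionRing (MvPolynomial (Fin n) ℤ)) (X i))
    (hnz : ∀ m, x m ≠ 0)
    (hrec : ∀ m, x m * x (m + n) = aeval (fun i : ℕ => x (m + i)) P) :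
    ∀ m, x m ∈ Subring.closure
      ((Set.range fun i : Fin n =>
          algebraMap (MvPolynomial (Fin n) ℤ) (FractionRing (MvPolynomial (Fin n) ℤ)) (X i)) ∪
        (Set.range fun i : Fin n =>
          (algebraMap (MvPolynomial (Fin n) ℤ) (FractionRing (MvPolynomial (Fin n) ℤ)) (X i))⁻¹)) :=
  stmt5_general n hn A Acoef P hP x hinit hnz hrec
end

section
/- Fix n ≥ 2 and integers A, B. Suppose the polynomial P = x_1·x_{n−1} + A·(x_1 + x_2 + … + x_{n−1}) + B is irreducible in ℤ[x_1,…,x_{n−1}] and not divisible by any x_j. Then every term of any sequence x : ℕ → F generated by P is a Laurent polynomial. -/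
/-!
Put `q m = (x (m + 2) + x m + A) / x (m + 1)`. Subtracting the recurrence at `m` from the one at
`m + 1`, the linear terms `A (x (m + 1) + ⋯ + x (m + n - 1))` telescope, leaving
`x (m + 1) (x (m + n + 1) + x (m + n - 1) + A) = x (m + n) (x (m + 2) + x m + A)`,
so `q` is periodic of period `n - 1`. Its values over one period involve only `x 0, …, x n`
and the inverses of `x 1, …, x (n - 1)`, so they are Laurent polynomials (`x n` is one by the
recurrence at `m = 0`). Then `x (m + 2) = q m * x (m + 1) - x m - A` is a Laurent polynomial
by induction.
-/

open MvPolynomial Finset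

theorem Finset.sum_Icc_one_shift {M : Type*} [AddCommMonoid M] (f : ℕ → M) (p : ℕ) :
    ∑ i ∈ Icc 1 p, f (i + 1) + f 1 = ∑ i ∈ Icc 1 p, f i + f (p + 1) := by
  induction p with
  | zero => simp
  | succ p ih => rw [sum_Icc_succ_top (by omega), sum_Icc_succ_top (by omega), add_right_comm, ih]

theorem mem_subring_of_forall_div_mem {K : Type*} [Field K] {L : Subring K} {c : K} {x : ℕ → K}
    (hc : c ∈ L) (h₀ : x 0 ∈ L) (h₁ : x 1 ∈ L) (hx : ∀ m, x m ≠ 0)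
    (hq : ∀ m, (x (m + 2) + x m + c) / x (m + 1) ∈ L) (m : ℕ) : x m ∈ L := by
  suffices ∀ m, x m ∈ L ∧ x (m + 1) ∈ L from (this m).1
  intro m
  induction m with
  | zero => exact ⟨h₀, h₁⟩
  | succ m ih =>
    refine ⟨ih.2, ?_⟩
    have hstep : x (m + 2) = (x (m + 2) + x m + c) / x (m + 1) * x (m + 1) - x m - c := by
      rw [div_mul_cancel₀ _ (hx _)]
      ring
    rw [hstep]
    exact sub_mem (sub_mem (mul_mem (hq m) ih.2) ih.1) hc

/-- The recurrence generated by `x₁ xₚ + A (x₁ + ⋯ + xₚ) + B`; `p` stands for `n - 1`. -/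
def SatisfiesExtremeRecurrence {R : Type*} [CommRing R] (A B : R) (p : ℕ) (x : ℕ → R) :
    Prop :=
  ∀ m, x m * x (m + (p + 1)) = x (m + 1) * x (m + p) + A * ∑ i ∈ Icc 1 p, x (m + i) + B

namespace SatisfiesExtremeRecurrence

theorem mul_shift_eq {R : Type*} [CommRing R] {A B : R} {p : ℕ} {x : ℕ → R}
    (hrec : SatisfiesExtremeRecurrence A B p x) (m : ℕ) :
    x (m + 1) * (x (m + p + 2) + x (m + p) + A) = x (m + p + 1) * (x (m + 2) + x m + A) := by
  have hsum := sum_Icc_one_shift (fun i => x (m + i)) p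
  have h₀ := hrec m
  have h₁ := hrec (m + 1)
  simp only [← add_assoc, add_right_comm m 1] at hsum h₀ h₁
  linear_combination h₁ - h₀ + A * hsum

variable {K : Type*} [Field K] {A B : K} {p : ℕ} {x : ℕ → K}

theorem periodic_ratio (hrec : SatisfiesExtremeRecurrence A B p x) (hx : ∀ m, x m ≠ 0) :
    Function.Periodic (fun m => (x (m + 2) + x m + A) / x (m + 1)) p := by
  intro m
  show (x (m + p + 2) + x (m + p) + A) / x (m + p + 1) = _
  rw [div_eq_div_iff (hx _) (hx _)]
  linear_combination hrec.mul_shift_eq m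

theorem mem_subring (hrec : SatisfiesExtremeRecurrence A B p x) (hp : 0 < p) (hx : ∀ m, x m ≠ 0)
    {L : Subring K} (hA : A ∈ L) (hB : B ∈ L) (hmem : ∀ i ≤ p, x i ∈ L)
    (hinv : ∀ i ≤ p, (x i)⁻¹ ∈ L) (m : ℕ) : x m ∈ L := by
  have hnext : x (p + 1) ∈ L := by
    have h := hrec 0
    simp only [zero_add] at h
    rw [← inv_mul_cancel_left₀ (hx 0) (x (p + 1)), h]
    exact mul_mem (hinv 0 hp.le) (add_mem (add_mem (mul_mem (hmem 1 hp) (hmem p le_rfl))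
      (mul_mem hA (sum_mem fun i hi => hmem i (mem_Icc.1 hi).2))) hB)
  have hmem_succ : ∀ i ≤ p + 1, x i ∈ L := fun i hi =>
    (Nat.le_succ_iff.1 hi).elim (hmem i) fun h => h ▸ hnext
  have hq : ∀ m, (x (m + 2) + x m + A) / x (m + 1) ∈ L := by
    intro m
    rw [← (hrec.periodic_ratio hx).map_mod_nat m, div_eq_mul_inv]
    have hlt := Nat.mod_lt m hp
    exact mul_mem (add_mem (add_mem (hmem_succ (m % p + 2) (by omega))
      (hmem_succ (m % p) (by omega))) hA) (hinv (m % p + 1) (by omega))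
  exact mem_subring_of_forall_div_mem hA (hmem 0 hp.le) (hmem 1 hp) hx hq m

end SatisfiesExtremeRecurrence

theorem stmt6_general (n : ℕ) (hn : 2 ≤ n) (A B : ℤ)
    (P : MvPolynomial ℕ ℤ)
    (hP : P = X 1 * X (n - 1) + C A * (∑ i ∈ Finset.Icc 1 (n - 1), X i) + C B)
    (x : ℕ → FractionRing (MvPolynomial (Fin n) ℤ))
    (hinit : ∀ i : Fin n, x i =
      algebraMap (MvPolynomial (Fin n) ℤ) (FractionRing (MvPolynomial (Fin n) ℤ)) (X i))
    (hnz : ∀ m, x m ≠ 0)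
    (hrec : ∀ m, x m * x (m + n) = aeval (fun i : ℕ => x (m + i)) P) :
    ∀ m, x m ∈ Subring.closure
      ((Set.range fun i : Fin n =>
          algebraMap (MvPolynomial (Fin n) ℤ) (FractionRing (MvPolynomial (Fin n) ℤ)) (X i)) ∪
        (Set.range fun i : Fin n =>
          (algebraMap (MvPolynomial (Fin n) ℤ) (FractionRing (MvPolynomial (Fin n) ℤ)) (X i))⁻¹)) := by
  obtain ⟨p, rfl⟩ : ∃ p, n = p + 1 := ⟨n - 1, by omega⟩
  have hext :
      SatisfiesExtremeRecurrence (A : FractionRing (MvPolynomial (Fin (p + 1)) ℤ)) B p x := by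
    intro m
    simpa [hP] using hrec m
  refine hext.mem_subring (by omega) hnz (intCast_mem _ A) (intCast_mem _ B) (fun i hi => ?_)
    (fun i hi => ?_)
  · rw [show x i = _ from hinit ⟨i, by omega⟩]
    exact Subring.subset_closure (Or.inl ⟨_, rfl⟩)
  · rw [show x i = _ from hinit ⟨i, by omega⟩]
    exact Subring.subset_closure (Or.inr ⟨_, rfl⟩)

/-- Extreme polynomial case (family (3) of Theorem 3.7 with Corollary 3.8). -/
theorem stmt6 (n : ℕ) (hn : 2 ≤ n) (A B : ℤ)
    (P : MvPolynomial ℕ ℤ)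
    (hP : P = X 1 * X (n - 1) + C A * (∑ i ∈ Finset.Icc 1 (n - 1), X i) + C B)
    (hirr : Irreducible P)
    (hndvd : ∀ j ∈ Finset.Icc 1 (n - 1), ¬ X j ∣ P)
    (x : ℕ → FractionRing (MvPolynomial (Fin n) ℤ))
    (hinit : ∀ i : Fin n, x i =
      algebraMap (MvPolynomial (Fin n) ℤ) (FractionRing (MvPolynomial (Fin n) ℤ)) (X i))
    (hnz : ∀ m, x m ≠ 0)
    (hrec : ∀ m, x m * x (m + n) = aeval (fun i : ℕ => x (m + i)) P) :
    ∀ m, x m ∈ Subring.closure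
      ((Set.range fun i : Fin n =>
          algebraMap (MvPolynomial (Fin n) ℤ) (FractionRing (MvPolynomial (Fin n) ℤ)) (X i)) ∪
        (Set.range fun i : Fin n =>
          (algebraMap (MvPolynomial (Fin n) ℤ) (FractionRing (MvPolynomial (Fin n) ℤ)) (X i))⁻¹)) :=
  stmt6_general n hn A B P hP x hinit hnz hrec
end

section
/- Fix an odd integer n > 2 and integers A, B. Suppose the polynomial P = ∑_{i=1}^{n−2} x_i·x_{i+1} + A·(x_1 + … + x_{n−1}) + B is irreducible in ℤ[x_1,…,x_{n−1}] and not divisible by any x_j. Then every term of any sequence x : ℕ → F generated by P is a Laurent polynomial. -/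
/-!
Write `n = 2k + 1`. Subtracting the recurrence at `m` from the one at `m + 1` leaves
`x (m+1) * (x (m+2) + x (m+n+1) + A) = x (m+n) * (x m + x (m+n-1) + A)`, so the ratio
`(x q + x (q+n-1) + A) / (x (q+1) * x (q+3) * ⋯ * x (q+n-2))` is `2`-periodic in `q`.
Its two values involve only `x 0, …, x n` and inverses of initial variables, hence are Laurent
polynomials, and solving the ratio for `x (q+n-1)` writes every later term as a polynomial in
earlier terms and these two invariants.
-/

open Finset

theorem Finset.sum_Icc_one_add_succ {M : Type*} [AddCommMonoid M] (g : ℕ → M) (m b : ℕ) :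
    ∑ i ∈ Icc 1 b, g (m + 1 + i) + g (m + 1) = ∑ i ∈ Icc 1 b, g (m + i) + g (m + b + 1) := by
  induction b with
  | zero => simp
  | succ b ih =>
    rw [sum_Icc_succ_top (by omega), sum_Icc_succ_top (by omega), add_right_comm, ih]
    ring_nf

section ChainRecurrence

variable {R : Type*} [CommRing R]

/-- The recurrence `x m * x (m + n) = P (x (m + 1), …, x (m + n - 1))` for the chain polynomial
`P = ∑_{i=1}^{n-2} y i * y (i + 1) + A * ∑_{i=1}^{n-1} y i + B`. -/
def ChainRecurrence (n : ℕ) (A B : R) (x : ℕ → R) : Prop :=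
  ∀ m, x m * x (m + n) =
    ∑ i ∈ Icc 1 (n - 2), x (m + i) * x (m + i + 1) + A * ∑ i ∈ Icc 1 (n - 1), x (m + i) + B

variable {n : ℕ} {A B : R} {x : ℕ → R}

theorem ChainRecurrence.cross (h : ChainRecurrence n A B x) (hn : 2 ≤ n) (m : ℕ) :
    x (m + 1) * (x (m + 2) + x (m + n + 1) + A) = x (m + n) * (x m + x (m + n - 1) + A) := by
  have hprod := sum_Icc_one_add_succ (fun j => x j * x (j + 1)) m (n - 2)
  have hsum := sum_Icc_one_add_succ x m (n - 1)
  have h1 := h (m + 1)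
  simp only [show m + (n - 2) + 1 = m + n - 1 by omega, show m + n - 1 + 1 = m + n by omega,
    show m + 1 + 1 = m + 2 by omega] at hprod
  rw [show m + (n - 1) + 1 = m + n by omega] at hsum
  rw [show m + 1 + n = m + n + 1 by omega] at h1
  linear_combination h1 - h m + hprod + A * hsum

end ChainRecurrence

section OddProd

variable {M : Type*} [CommMonoid M]

def oddProd (x : ℕ → M) (k q : ℕ) : M := ∏ j ∈ range k, x (q + 2 * j + 1)

theorem oddProd_add_two_mul (x : ℕ → M) (k q : ℕ) :
    oddProd x k (q + 2) * x (q + 1) = oddProd x k q * x (q + 2 * k + 1) := by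
  have hbot := prod_range_succ' (fun j => x (q + 2 * j + 1)) k
  have htop := prod_range_succ (fun j => x (q + 2 * j + 1)) k
  simp only [mul_add, mul_zero, add_zero, show ∀ j, q + (2 * j + 2) + 1 = q + 2 + 2 * j + 1 by
    intro j; ring] at hbot
  rw [oddProd, oddProd, ← hbot, htop]

end OddProd

section Field

variable {K : Type*} [Field K]

theorem oddProd_ne_zero {x : ℕ → K} (hx : ∀ i, x i ≠ 0) (k q : ℕ) : oddProd x k q ≠ 0 :=
  prod_ne_zero_iff.mpr fun _ _ => hx _

theorem periodic_div_oddProd {x u : ℕ → K} {k : ℕ} (hx : ∀ i, x i ≠ 0)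
    (h : ∀ q, x (q + 1) * u (q + 2) = x (q + 2 * k + 1) * u q) :
    Function.Periodic (fun q => u q / oddProd x k q) 2 := fun q => by
  rw [div_eq_div_iff (oddProd_ne_zero hx k _) (oddProd_ne_zero hx k q)]
  apply mul_left_cancel₀ (hx (q + 1))
  linear_combination oddProd x k q * h q - u q * oddProd_add_two_mul x k q

theorem inv_oddProd_mem {S : Subring K} {x : ℕ → K} {k q : ℕ}
    (h : ∀ j < k, (x (q + 2 * j + 1))⁻¹ ∈ S) : (oddProd x k q)⁻¹ ∈ S := by
  rw [oddProd, ← prod_inv_distrib]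
  exact prod_mem fun j hj => h j (mem_range.mp hj)

theorem forall_mem_of_div_oddProd_mem {S : Subring K} {x : ℕ → K} {k : ℕ} {c : K} (hk : 0 < k)
    (hx : ∀ i, x i ≠ 0) (hc : c ∈ S)
    (hratio : ∀ q, (x q + x (q + 2 * k) + c) / oddProd x k q ∈ S)
    (hinit : ∀ i < 2 * k, x i ∈ S) (m : ℕ) : x m ∈ S := by
  induction m using Nat.strong_induction_on with
  | _ m ih =>
    obtain hm | hm := lt_or_ge m (2 * k)
    · exact hinit m hm
    obtain ⟨q, rfl⟩ := Nat.exists_eq_add_of_le' hm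
    have hsolve : x (q + 2 * k) =
        (x q + x (q + 2 * k) + c) / oddProd x k q * oddProd x k q - x q - c := by
      rw [div_mul_cancel₀ _ (oddProd_ne_zero hx k q)]
      ring
    rw [hsolve]
    refine sub_mem (sub_mem (mul_mem (hratio q) (prod_mem fun j hj => ?_)) (ih q (by omega))) hc
    have := mem_range.mp hj
    exact ih _ (by omega)

theorem ChainRecurrence.mem_subring {n : ℕ} {A B : K} {x : ℕ → K} (h : ChainRecurrence n A B x)
    (hn : 2 < n) (hodd : Odd n) (hx : ∀ i, x i ≠ 0) {S : Subring K} (hA : A ∈ S) (hB : B ∈ S)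
    (hinit : ∀ i < n, x i ∈ S ∧ (x i)⁻¹ ∈ S) (m : ℕ) : x m ∈ S := by
  have hxn : x n ∈ S := by
    rw [← inv_mul_cancel_left₀ (hx 0) (x n), ← zero_add n, h 0]
    refine mul_mem (hinit 0 (by omega)).2 (add_mem (add_mem ?_ (mul_mem hA ?_)) hB)
    · exact sum_mem fun i hi => by
        have := mem_Icc.mp hi
        exact mul_mem (hinit _ (by omega)).1 (hinit _ (by omega)).1
    · exact sum_mem fun i hi => by
        have := mem_Icc.mp hi
        exact (hinit _ (by omega)).1
  have hlow : ∀ i ≤ n, x i ∈ S := fun i hi =>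
    (Nat.lt_or_eq_of_le hi).elim (fun hi => (hinit i hi).1) (· ▸ hxn)
  obtain ⟨k, rfl⟩ := hodd
  have hper : Function.Periodic (fun q => (x q + x (q + 2 * k) + A) / oddProd x k q) 2 := by
    refine periodic_div_oddProd hx fun q => ?_
    have := h.cross (by omega) q
    rw [show q + (2 * k + 1) + 1 = q + 2 + 2 * k by omega,
      show q + (2 * k + 1) - 1 = q + 2 * k by omega, ← add_assoc] at this
    exact this
  refine forall_mem_of_div_oddProd_mem (k := k) (by omega) hx hA (fun q => ?_)
    (fun i hi => hlow i (by omega)) m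
  rw [← hper.map_mod_nat q, div_eq_mul_inv]
  have := Nat.mod_lt q two_pos
  exact mul_mem (add_mem (add_mem (hlow _ (by omega)) (hlow _ (by omega))) hA)
    (inv_oddProd_mem fun j hj => (hinit _ (by omega)).2)

end Field

open MvPolynomial

theorem stmt7_general (n : ℕ) (hn : 2 < n) (hodd : Odd n) (A B : ℤ)
    (P : MvPolynomial ℕ ℤ)
    (hP : P = (∑ i ∈ Finset.Icc 1 (n - 2), X i * X (i + 1)) +
        C A * (∑ i ∈ Finset.Icc 1 (n - 1), X i) + C B)
    (x : ℕ → FractionRing (MvPolynomial (Fin n) ℤ))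
    (hinit : ∀ i : Fin n, x i =
      algebraMap (MvPolynomial (Fin n) ℤ) (FractionRing (MvPolynomial (Fin n) ℤ)) (X i))
    (hnz : ∀ m, x m ≠ 0)
    (hrec : ∀ m, x m * x (m + n) = aeval (fun i : ℕ => x (m + i)) P) :
    ∀ m, x m ∈ Subring.closure
      ((Set.range fun i : Fin n =>
          algebraMap (MvPolynomial (Fin n) ℤ) (FractionRing (MvPolynomial (Fin n) ℤ)) (X i)) ∪
        (Set.range fun i : Fin n =>
          (algebraMap (MvPolynomial (Fin n) ℤ) (FractionRing (MvPolynomial (Fin n) ℤ)) (X i))⁻¹)) := by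
  have hchain : ChainRecurrence n (A : FractionRing (MvPolynomial (Fin n) ℤ)) B x := fun m => by
    rw [hrec m, hP]
    simp only [map_add, map_mul, map_sum, aeval_X, eq_intCast, map_intCast, ← add_assoc]
  refine hchain.mem_subring hn hodd hnz (intCast_mem _ A) (intCast_mem _ B) fun i hi => ?_
  rw [show x i = x (⟨i, hi⟩ : Fin n) from rfl, hinit]
  exact ⟨Subring.subset_closure (Or.inl ⟨_, rfl⟩), Subring.subset_closure (Or.inr ⟨_, rfl⟩)⟩

/-- Chain polynomial case (family (5) of Theorem 3.7 with Corollary 3.8). -/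
theorem stmt7 (n : ℕ) (hn : 2 < n) (hodd : Odd n) (A B : ℤ)
    (P : MvPolynomial ℕ ℤ)
    (hP : P = (∑ i ∈ Finset.Icc 1 (n - 2), X i * X (i + 1)) +
        C A * (∑ i ∈ Finset.Icc 1 (n - 1), X i) + C B)
    (hirr : Irreducible P)
    (hndvd : ∀ j ∈ Finset.Icc 1 (n - 1), ¬ X j ∣ P)
    (x : ℕ → FractionRing (MvPolynomial (Fin n) ℤ))
    (hinit : ∀ i : Fin n, x i =
      algebraMap (MvPolynomial (Fin n) ℤ) (FractionRing (MvPolynomial (Fin n) ℤ)) (X i))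
    (hnz : ∀ m, x m ≠ 0)
    (hrec : ∀ m, x m * x (m + n) = aeval (fun i : ℕ => x (m + i)) P) :
    ∀ m, x m ∈ Subring.closure
      ((Set.range fun i : Fin n =>
          algebraMap (MvPolynomial (Fin n) ℤ) (FractionRing (MvPolynomial (Fin n) ℤ)) (X i)) ∪
        (Set.range fun i : Fin n =>
          (algebraMap (MvPolynomial (Fin n) ℤ) (FractionRing (MvPolynomial (Fin n) ℤ)) (X i))⁻¹)) :=
  stmt7_general n hn hodd A B P hP x hinit hnz hrec
end

section
/- Let K be a field, n ≥ 2 a natural number, A, B ∈ K, and let x : ℕ → K be a sequence with x_m ≠ 0 for all m satisfying x_m · x_{m+n} = ∑_{i=1}^{n−1} x_{m+i}² + A·∑_{i=1}^{n−1} x_{m+i} + B for all m ≥ 0. Define J_m = (∑_{i=0}^{n−1} x_{m+i}² + A·∑_{i=0}^{n−1} x_{m+i} + B) / ∏_{i=0}^{n−1} x_{m+i}. Then J_{m+1} = J_m for all m ≥ 0, i.e. J_m is a conserved quantity of the recurrence. -/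
/-!
Write `n = k + 1`, `a = x m`, `b = x (m + n)` and let `p` be the product of the `k` terms
strictly between them. Peeling `a` off the window of `J m`, the numerator becomes `a² + A a + a b`
by the recurrence, so `J m = (a + b + A) / p`; peeling `b` off the window of `J (m + 1)` gives
the same value.
-/

open Finset

section Windows

variable {M : Type*} [CommMonoid M] (f : ℕ → M) (k m : ℕ)

@[to_additive]
theorem prod_range_succ_add_eq_mul_prod :
    ∏ i ∈ range (k + 1), f (m + i) = f m * ∏ i ∈ range k, f (m + 1 + i) := by
  rw [prod_range_succ', mul_comm, add_zero]
  simp only [add_assoc, add_comm 1]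

@[to_additive]
theorem prod_range_succ_shift_eq_prod_mul :
    ∏ i ∈ range (k + 1), f (m + 1 + i) = (∏ i ∈ range k, f (m + 1 + i)) * f (m + (k + 1)) := by
  rw [prod_range_succ, add_assoc, add_comm 1]

@[to_additive]
theorem prod_Icc_add_eq_prod_range_shift :
    ∏ i ∈ Icc 1 k, f (m + i) = ∏ i ∈ range k, f (m + 1 + i) := by
  rw [← Ico_add_one_right_eq_Icc, prod_Ico_eq_prod_range, add_tsub_cancel_right]
  simp only [add_assoc, add_comm 1]

end Windows

section Peeling

variable {K : Type*} [Field K] {a b p A B S₁ S₂ : K}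

theorem first_peel_div_eq (ha : a ≠ 0) (hp : p ≠ 0) (hab : a * b = S₂ + A * S₁ + B) :
    (a ^ 2 + S₂ + A * (a + S₁) + B) / (a * p) = (a + b + A) / p := by
  rw [div_eq_div_iff (mul_ne_zero ha hp) hp]
  linear_combination -p * hab

theorem last_peel_div_eq (hb : b ≠ 0) (hp : p ≠ 0) (hab : a * b = S₂ + A * S₁ + B) :
    (S₂ + b ^ 2 + A * (S₁ + b) + B) / (p * b) = (a + b + A) / p := by
  rw [div_eq_div_iff (mul_ne_zero hp hb) hp]
  linear_combination -p * hab

end Peeling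

theorem stmt12_general {K : Type*} [Field K] (n : ℕ) (A B : K)
    (x : ℕ → K) (hnz : ∀ m, x m ≠ 0)
    (hrec : ∀ m, x m * x (m + n) =
      (∑ i ∈ Finset.Icc 1 (n - 1), (x (m + i)) ^ 2) +
        A * (∑ i ∈ Finset.Icc 1 (n - 1), x (m + i)) + B)
    (J : ℕ → K)
    (hJ : ∀ m, J m =
      ((∑ i ∈ Finset.range n, (x (m + i)) ^ 2) +
          A * (∑ i ∈ Finset.range n, x (m + i)) + B) /
        ∏ i ∈ Finset.range n, x (m + i)) :
    ∀ m, J (m + 1) = J m := by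
  intro m
  rcases n with _ | k
  · simp only [hJ, range_zero, sum_empty, prod_empty]
  have hab := hrec m
  rw [add_tsub_cancel_right, sum_Icc_add_eq_sum_range_shift (fun j ↦ x j ^ 2),
    sum_Icc_add_eq_sum_range_shift x] at hab
  have hp : ∏ i ∈ range k, x (m + 1 + i) ≠ 0 := prod_ne_zero_iff.mpr fun i _ ↦ hnz _
  rw [hJ (m + 1), sum_range_succ_shift_eq_sum_add (fun j ↦ x j ^ 2),
    sum_range_succ_shift_eq_sum_add x, prod_range_succ_shift_eq_prod_mul,
    last_peel_div_eq (hnz _) hp hab, hJ m, sum_range_succ_add_eq_add_sum (fun j ↦ x j ^ 2),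
    sum_range_succ_add_eq_add_sum x, prod_range_succ_add_eq_mul_prod,
    first_peel_div_eq (hnz m) hp hab]

/-- Section 7.1: the conserved quantity for the recurrence generated by
`P = ∑ x_i² + A·∑ x_i + B`. -/
theorem stmt12 {K : Type*} [Field K] (n : ℕ) (hn : 2 ≤ n) (A B : K)
    (x : ℕ → K) (hnz : ∀ m, x m ≠ 0)
    (hrec : ∀ m, x m * x (m + n) =
      (∑ i ∈ Finset.Icc 1 (n - 1), (x (m + i)) ^ 2) +
        A * (∑ i ∈ Finset.Icc 1 (n - 1), x (m + i)) + B)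
    (J : ℕ → K)
    (hJ : ∀ m, J m =
      ((∑ i ∈ Finset.range n, (x (m + i)) ^ 2) +
          A * (∑ i ∈ Finset.range n, x (m + i)) + B) /
        ∏ i ∈ Finset.range n, x (m + i)) :
    ∀ m, J (m + 1) = J m :=
  stmt12_general n A B x hnz hrec J hJ
end

section
/- Let K be a field, n ≥ 2 a natural number, A, B ∈ K, and let x : ℕ → K be a sequence with x_m ≠ 0 for all m satisfying x_m · x_{m+n} = ∑_{i=1}^{n−1} x_{m+i}² + A·∑_{i=1}^{n−1} x_{m+i} + B for all m ≥ 0. Let J = (∑_{i=0}^{n−1} x_i² + A·∑_{i=0}^{n−1} x_i + B) / ∏_{i=0}^{n−1} x_i. Then for all m ≥ 0, x_{m+n} = J·∏_{i=1}^{n−1} x_{m+i} − x_m − A. -/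
/-!
Let `windowQuad m = ∑_{i<n} x_{m+i}² + A ∑_{i<n} x_{m+i} + B` and `windowProd m = ∏_{i<n} x_{m+i}`.
Splitting off the first, resp. the last, term of the window and using the recurrence gives
`windowQuad m = x_m (x_m + A + x_{m+n})` and `windowQuad (m+1) = x_{m+n} (x_{m+n} + A + x_m)`, so
`windowQuad (m+1) x_m = x_{m+n} windowQuad m`, while also `windowProd (m+1) x_m = x_{m+n} windowProd m`.
Hence `windowQuad m / windowProd m` is the constant `J`, and cancelling `x_m` in
`x_m (x_m + A + x_{m+n}) = J x_m ∏_{i=1}^{n-1} x_{m+i}` gives the claim.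
-/

open Finset

section WindowSplit

variable {M : Type*} [CommMonoid M] {n : ℕ}

@[to_additive]
lemma prod_range_eq_mul_prod_Icc (f : ℕ → M) (hn : 0 < n) :
    ∏ i ∈ range n, f i = f 0 * ∏ i ∈ Icc 1 (n - 1), f i := by
  obtain ⟨k, rfl⟩ : ∃ k, n = k + 1 := ⟨n - 1, by omega⟩
  rw [range_eq_Ico, prod_eq_prod_Ico_succ_bot hn, Nat.add_sub_cancel, Ico_add_one_right_eq_Icc]

@[to_additive sum_range_add_one_eq_sum_Icc_add]
lemma prod_range_add_one_eq_prod_Icc_mul (f : ℕ → M) (hn : 0 < n) :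
    ∏ i ∈ range n, f (i + 1) = (∏ i ∈ Icc 1 (n - 1), f i) * f n := by
  obtain ⟨k, rfl⟩ : ∃ k, n = k + 1 := ⟨n - 1, by omega⟩
  rw [prod_range_succ, range_eq_Ico, prod_Ico_add', zero_add, Ico_add_one_right_eq_Icc,
    Nat.add_sub_cancel]

end WindowSplit

section Window

variable {K : Type*} [Field K] {n : ℕ} {A B : K} {x : ℕ → K}

variable (n A B x) in
def windowQuad (m : ℕ) : K :=
  ∑ i ∈ range n, x (m + i) ^ 2 + A * ∑ i ∈ range n, x (m + i) + B

variable (n x) in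
def windowProd (m : ℕ) : K :=
  ∏ i ∈ range n, x (m + i)

lemma windowProd_eq_mul (hn : 0 < n) (m : ℕ) :
    windowProd n x m = x m * ∏ i ∈ Icc 1 (n - 1), x (m + i) := by
  rw [windowProd, prod_range_eq_mul_prod_Icc (fun i => x (m + i)) hn, add_zero]

lemma windowProd_succ_mul (hn : 0 < n) (m : ℕ) :
    windowProd n x (m + 1) * x m = windowProd n x m * x (m + n) := by
  have hshift : ∀ i, m + 1 + i = m + (i + 1) := fun i => by omega
  rw [windowProd_eq_mul hn m, windowProd, prod_congr rfl fun i _ => congrArg x (hshift i),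
    prod_range_add_one_eq_prod_Icc_mul (fun i => x (m + i)) hn]
  ring

variable (hrec : ∀ m, x m * x (m + n) =
  (∑ i ∈ Icc 1 (n - 1), x (m + i) ^ 2) + A * (∑ i ∈ Icc 1 (n - 1), x (m + i)) + B)
include hrec

lemma windowQuad_eq (hn : 0 < n) (m : ℕ) :
    windowQuad n A B x m = x m * (x m + A + x (m + n)) := by
  rw [windowQuad, sum_range_eq_add_sum_Icc (fun i => x (m + i) ^ 2) hn,
    sum_range_eq_add_sum_Icc (fun i => x (m + i)) hn, add_zero]
  linear_combination -(hrec m)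

lemma windowQuad_succ_eq (hn : 0 < n) (m : ℕ) :
    windowQuad n A B x (m + 1) = x (m + n) * (x (m + n) + A + x m) := by
  have hshift : ∀ i, m + 1 + i = m + (i + 1) := fun i => by omega
  simp only [windowQuad, hshift]
  rw [sum_range_add_one_eq_sum_Icc_add (fun i => x (m + i) ^ 2) hn,
    sum_range_add_one_eq_sum_Icc_add (fun i => x (m + i)) hn]
  linear_combination -(hrec m)

lemma windowQuad_eq_div_mul_windowProd (hn : 0 < n) (hnz : ∀ m, x m ≠ 0) (m : ℕ) :
    windowQuad n A B x m = windowQuad n A B x 0 / windowProd n x 0 * windowProd n x m := by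
  induction m with
  | zero =>
    have hprod : windowProd n x 0 ≠ 0 := prod_ne_zero_iff.mpr fun i _ => hnz (0 + i)
    rw [div_mul_cancel₀ _ hprod]
  | succ m ih =>
    refine mul_right_cancel₀ (hnz m) ?_
    calc windowQuad n A B x (m + 1) * x m = x (m + n) * windowQuad n A B x m := by
          rw [windowQuad_succ_eq hrec hn, windowQuad_eq hrec hn]; ring
      _ = windowQuad n A B x 0 / windowProd n x 0 * (windowProd n x m * x (m + n)) := by
          rw [ih]; ring
      _ = _ := by rw [← windowProd_succ_mul hn]; ring

end Window

/-- Section 7.1: multilinearization of the recurrence generated by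
`P = ∑ x_i² + A·∑ x_i + B`. -/
theorem stmt13 {K : Type*} [Field K] (n : ℕ) (hn : 2 ≤ n) (A B : K)
    (x : ℕ → K) (hnz : ∀ m, x m ≠ 0)
    (hrec : ∀ m, x m * x (m + n) =
      (∑ i ∈ Finset.Icc 1 (n - 1), (x (m + i)) ^ 2) +
        A * (∑ i ∈ Finset.Icc 1 (n - 1), x (m + i)) + B)
    (J : K)
    (hJ : J = ((∑ i ∈ Finset.range n, (x i) ^ 2) +
        A * (∑ i ∈ Finset.range n, x i) + B) / ∏ i ∈ Finset.range n, x i) :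
    ∀ m, x (m + n) = J * (∏ i ∈ Finset.Icc 1 (n - 1), x (m + i)) - x m - A := by
  have hn0 : 0 < n := by omega
  have hJ_window : J = windowQuad n A B x 0 / windowProd n x 0 := by
    simp only [hJ, windowQuad, windowProd, zero_add]
  intro m
  have key := windowQuad_eq_div_mul_windowProd hrec hn0 hnz m
  rw [← hJ_window, windowQuad_eq hrec hn0, windowProd_eq_mul hn0] at key
  have hcancel := mul_left_cancel₀ (hnz m) (key.trans (mul_left_comm _ _ _))
  linear_combination hcancel
end

section
/- Let n ≥ 2 be a natural number and A, B ∈ ℤ. Then there exists a sequence y : ℕ → ℤ such that y_m = 1 for all 0 ≤ m ≤ n−1, y_{m+n} = (n(1+A)+B)·∏_{i=1}^{n−1} y_{m+i} − y_m − A for all m ≥ 0, and for every m ≥ 0 the n-tuple (y_m, y_{m+1}, …, y_{m+n−1}) is an integer solution of the quadratic Diophantine equation ∑_{i=0}^{n−1} x_i² + A·∑_{i=0}^{n−1} x_i + B = (n(1+A)+B)·∏_{i=0}^{n−1} x_i. -/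
open Finset

@[to_additive]
theorem prod_range_succ_shift {M : Type*} [CommMonoid M] (f : ℕ → M) (k m : ℕ) :
    ∏ i ∈ range (k + 1), f (m + 1 + i) = (∏ i ∈ range k, f (m + (i + 1))) * f (m + (k + 1)) := by
  rw [prod_range_succ]
  congr 1
  · exact prod_congr rfl fun i _ => congrArg f (by omega)
  · exact congrArg f (by omega)

theorem prod_Icc_one_eq_prod_range {M : Type*} [CommMonoid M] (f : ℕ → M) (k : ℕ) :
    ∏ i ∈ Icc 1 k, f i = ∏ i ∈ range k, f (i + 1) := by
  rw [range_eq_Ico, prod_Ico_add' f 0 k 1, zero_add, Ico_add_one_right_eq_Icc]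

section

variable {R : Type*} [CommRing R]

def windowForm (n : ℕ) (A C : R) (y : ℕ → R) (m : ℕ) : R :=
  ∑ i ∈ range n, y (m + i) ^ 2 + A * ∑ i ∈ range n, y (m + i) - C * ∏ i ∈ range n, y (m + i)

/-- Vieta jumping: as a polynomial in its first variable the form is monic quadratic, and the
recurrence replaces `y m` by the other root `C ∏ (y (m + 1), …) - A - y m`. -/
theorem windowForm_succ (A C : R) (k : ℕ) (y : ℕ → R)
    (hy : ∀ m, y (m + (k + 1)) = C * ∏ i ∈ range k, y (m + (i + 1)) - y m - A) (m : ℕ) :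
    windowForm (k + 1) A C y (m + 1) = windowForm (k + 1) A C y m := by
  unfold windowForm
  rw [sum_range_succ_shift (fun t => y t ^ 2), sum_range_succ_shift y, prod_range_succ_shift y,
    sum_range_succ' (fun i => y (m + i) ^ 2), sum_range_succ' (fun i => y (m + i)),
    prod_range_succ' (fun i => y (m + i)), add_zero]
  linear_combination (y (m + (k + 1)) - y m) * hy m

theorem windowForm_eq_windowForm_zero (A C : R) (k : ℕ) (y : ℕ → R)
    (hy : ∀ m, y (m + (k + 1)) = C * ∏ i ∈ range k, y (m + (i + 1)) - y m - A) (m : ℕ) :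
    windowForm (k + 1) A C y m = windowForm (k + 1) A C y 0 := by
  induction m with
  | zero => rfl
  | succ m ih => rw [windowForm_succ A C k y hy, ih]

theorem windowForm_zero_of_eq_one {n : ℕ} (A C : R) {y : ℕ → R} (hy : ∀ m < n, y m = 1) :
    windowForm n A C y 0 = n + A * n - C := by
  have hone : ∀ i ∈ range n, y i = 1 := fun i hi => hy i (mem_range.1 hi)
  simp only [windowForm, zero_add]
  rw [sum_congr rfl (g := fun _ => 1) fun i hi => by rw [hone i hi, one_pow],
    sum_congr rfl hone, prod_congr rfl hone]
  simp

/-- The window length is `k + 1` rather than `n`, which keeps the recursion well founded. -/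
def multilinSeq (k : ℕ) (C A : R) (m : ℕ) : R :=
  if m < k + 1 then 1
  else C * ∏ i : Fin k, multilinSeq k C A (m - (k + 1) + (i + 1))
    - multilinSeq k C A (m - (k + 1)) - A

theorem multilinSeq_of_lt {k : ℕ} {C A : R} {m : ℕ} (hm : m < k + 1) :
    multilinSeq k C A m = 1 := by
  rw [multilinSeq, if_pos hm]

theorem multilinSeq_add (k : ℕ) (C A : R) (m : ℕ) :
    multilinSeq k C A (m + (k + 1)) =
      C * ∏ i ∈ range k, multilinSeq k C A (m + (i + 1)) - multilinSeq k C A m - A := by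
  rw [multilinSeq, if_neg (by omega), Nat.add_sub_cancel,
    Fin.prod_univ_eq_prod_range (fun i => multilinSeq k C A (m + (i + 1)))]

end

/-- End of Section 7.1: the all-ones initial values and the multilinearized recurrence
produce infinitely many integer solutions of the quadratic Diophantine equation
`∑ x_i² + A·∑ x_i + B = (n(1+A)+B)·∏ x_i`. -/
theorem stmt14 (n : ℕ) (hn : 2 ≤ n) (A B : ℤ) :
    ∃ y : ℕ → ℤ,
      (∀ m < n, y m = 1) ∧
      (∀ m, y (m + n) =
        ((n : ℤ) * (1 + A) + B) * (∏ i ∈ Finset.Icc 1 (n - 1), y (m + i)) - y m - A) ∧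
      (∀ m, (∑ i ∈ Finset.range n, (y (m + i)) ^ 2) +
          A * (∑ i ∈ Finset.range n, y (m + i)) + B =
        ((n : ℤ) * (1 + A) + B) * ∏ i ∈ Finset.range n, y (m + i)) := by
  obtain ⟨k, rfl⟩ : ∃ k, n = k + 1 := ⟨n - 1, by omega⟩
  set C : ℤ := ((k + 1 : ℕ) : ℤ) * (1 + A) + B
  have hinit : ∀ m < k + 1, multilinSeq k C A m = 1 := fun m hm => multilinSeq_of_lt hm
  refine ⟨multilinSeq k C A, hinit, fun m => ?_, fun m => ?_⟩
  · rw [Nat.add_sub_cancel, prod_Icc_one_eq_prod_range (fun i => multilinSeq k C A (m + i))]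
    exact multilinSeq_add k C A m
  · have h := windowForm_eq_windowForm_zero A C k _ (multilinSeq_add k C A) m
    rw [windowForm_zero_of_eq_one A C hinit] at h
    unfold windowForm at h
    push_cast [C] at h ⊢
    linear_combination h
end

section
/- Let K be a field, let r ≥ 1 and n be integers with n ≥ 2r+1 and n ≡ 1 (mod r), let A ∈ K, and let x : ℕ → K be a sequence with x_m ≠ 0 for all m satisfying x_m · x_{m+n} = ∑_{i=0}^{(n−1)/r − 1} x_{m+ri+1}·x_{m+ri+r} + A for all m ≥ 0. Define J_m = (x_{m+1} + x_{m+n+r}) / ∏_{i=r+1}^{n} x_{m+i}. Then J_{m+1} = J_m for all m ≥ 0, i.e. J_m is a conserved quantity of the recurrence. -/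
/-!
Write `S m = ∑_{i<k} x_{m+ri+1} x_{m+ri+r}` with `n = rk + 1`. The difference `S (m+r) - S m`
telescopes to `x_{m+n} x_{m+n+r-1} - x_{m+1} x_{m+r}`, so subtracting the recurrence at `m` from
the recurrence at `m + r` gives `x_{m+r} (x_{m+1} + x_{m+n+r}) = x_{m+n} (x_m + x_{m+n+r-1})`.
Moving the product window of `J` one step multiplies its denominator by `x_{m+n+1} / x_{m+r+1}`,
which by this identity is exactly the factor gained by its numerator.
-/

open Finset

theorem Finset.prod_Icc_comp_succ_mul {M : Type*} [CommMonoid M] (f : ℕ → M) {a b : ℕ}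
    (hab : a ≤ b + 1) :
    (∏ i ∈ Icc a b, f (i + 1)) * f a = (∏ i ∈ Icc a b, f i) * f (b + 1) := by
  rw [← prod_Icc_succ_top hab, ← mul_prod_Ioc_eq_prod_Icc hab, mul_comm,
    ← Icc_add_one_left_eq_Ioc, ← map_add_right_Icc, prod_map]
  rfl

section JumpingRecurrence

variable {K : Type*} [CommRing K] (x : ℕ → K) (r k : ℕ)

theorem jumping_sum_shift_sub (m : ℕ) :
    (∑ i ∈ range k, x (m + r + (r * i + 1)) * x (m + r + (r * i + r))) -
        ∑ i ∈ range k, x (m + (r * i + 1)) * x (m + (r * i + r)) =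
      x (m + (r * k + 1)) * x (m + (r * k + r)) - x (m + 1) * x (m + r) := by
  rw [← sum_sub_distrib]
  convert sum_range_sub (fun i ↦ x (m + (r * i + 1)) * x (m + (r * i + r))) k using 3 <;>
    ring_nf

theorem jumping_mul_add_eq_mul_add {n : ℕ} (hn : n = r * k + 1) (A : K)
    (hrec : ∀ m, x m * x (m + n) =
      (∑ i ∈ range k, x (m + (r * i + 1)) * x (m + (r * i + r))) + A) (m : ℕ) :
    x (m + r + 1) * (x (m + 1 + 1) + x (m + 1 + n + r)) =
      x (m + n + 1) * (x (m + 1) + x (m + n + r)) := by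
  subst hn
  have := jumping_sum_shift_sub x r k (m + 1)
  have h1 := hrec (m + 1)
  have h2 := hrec (m + 1 + r)
  ring_nf at this h1 h2 ⊢
  linear_combination h2 - h1 + this

end JumpingRecurrence

theorem stmt15_general {K : Type*} [Field K] (n r : ℕ) (hn : 2 * r + 1 ≤ n)
    (hmod : n % r = 1 % r) (A : K)
    (x : ℕ → K) (hnz : ∀ m, x m ≠ 0)
    (hrec : ∀ m, x m * x (m + n) =
      (∑ i ∈ Finset.range ((n - 1) / r), x (m + (r * i + 1)) * x (m + (r * i + r))) + A)
    (J : ℕ → K)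
    (hJ : ∀ m, J m = (x (m + 1) + x (m + n + r)) / ∏ i ∈ Finset.Icc (r + 1) n, x (m + i)) :
    ∀ m, J (m + 1) = J m := by
  intro m
  have hnk : n = r * ((n - 1) / r) + 1 := by
    have := Nat.div_add_mod (n - 1) r
    rw [Nat.sub_mod_eq_zero_of_mod_eq hmod] at this
    omega
  have hkey := jumping_mul_add_eq_mul_add x r _ hnk A hrec m
  have hprod : (∏ i ∈ Icc (r + 1) n, x (m + 1 + i)) * x (m + r + 1) =
      (∏ i ∈ Icc (r + 1) n, x (m + i)) * x (m + n + 1) := by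
    convert prod_Icc_comp_succ_mul (fun i ↦ x (m + i)) (show r + 1 ≤ n + 1 by omega) using 3 <;>
      ring_nf
  have hD : ∀ m, ∏ i ∈ Icc (r + 1) n, x (m + i) ≠ 0 := fun m ↦ prod_ne_zero_iff.mpr fun _ _ ↦ hnz _
  rw [hJ, hJ, div_eq_div_iff (hD _) (hD _)]
  refine mul_right_cancel₀ (hnz (m + n + 1)) ?_
  linear_combination (∏ i ∈ Icc (r + 1) n, x (m + 1 + i)) * hkey -
    (x (m + 1 + 1) + x (m + 1 + n + r)) * hprod

/-- Section 7.2: the conserved quantity for the recurrence generated by the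
r-Jumping polynomial `P = ∑_{i=0}^{(n−1)/r − 1} x_{ri+1}·x_{ri+r} + A`. -/
theorem stmt15 {K : Type*} [Field K] (n r : ℕ) (hr : 1 ≤ r) (hn : 2 * r + 1 ≤ n)
    (hmod : n % r = 1 % r) (A : K)
    (x : ℕ → K) (hnz : ∀ m, x m ≠ 0)
    (hrec : ∀ m, x m * x (m + n) =
      (∑ i ∈ Finset.range ((n - 1) / r), x (m + (r * i + 1)) * x (m + (r * i + r))) + A)
    (J : ℕ → K)
    (hJ : ∀ m, J m = (x (m + 1) + x (m + n + r)) / ∏ i ∈ Finset.Icc (r + 1) n, x (m + i)) :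
    ∀ m, J (m + 1) = J m :=
  stmt15_general n r hn hmod A x hnz hrec J hJ
end

section
/- Let K be a field, let n and k be integers with 0 < k < n, and let x : ℕ → K be a sequence with x_m ≠ 0 for all m satisfying x_m · x_{m+n} = x_{m+k}·x_{m+n−k} + 1 for all m ≥ 0. Define J_m = (x_m + x_{m+2k}) / x_{m+k}. Then J_{m+n−k} = J_m for all m ≥ 0; that is, J_m is an (n−k)-invariant of the recurrence, depending only on the residue of m modulo n−k. -/
/- With `d = n - k` the recurrence says that the determinant
`x m * x (m + k + d) - x (m + k) * x (m + d)` is constant in `m`; equating its values at `m`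
and `m + k` is exactly the cross-multiplied form of `J (m + d) = J m`. -/

theorem add_mul_eq_add_mul_of_det_const {R : Type*} [CommRing R] (k d : ℕ) (x : ℕ → R) (c : R)
    (hdet : ∀ m, x m * x (m + k + d) = x (m + k) * x (m + d) + c) (m : ℕ) :
    (x m + x (m + 2 * k)) * x (m + k + d) = (x (m + d) + x (m + d + 2 * k)) * x (m + k) := by
  have hm := hdet m
  have hmk := hdet (m + k)
  rw [show m + k + k = m + 2 * k by ring, show m + 2 * k + d = m + d + 2 * k by ring] at hmk
  linear_combination hm - hmk

theorem stmt16_general {K : Type*} [Field K] (n k : ℕ) (hkn : k < n)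
    (x : ℕ → K) (hnz : ∀ m, x m ≠ 0)
    (hrec : ∀ m, x m * x (m + n) = x (m + k) * x (m + (n - k)) + 1)
    (J : ℕ → K)
    (hJ : ∀ m, J m = (x m + x (m + 2 * k)) / x (m + k)) :
    ∀ m, J (m + (n - k)) = J m := by
  obtain ⟨d, rfl⟩ : ∃ d, n = k + d := ⟨n - k, by omega⟩
  have hdet : ∀ m, x m * x (m + k + d) = x (m + k) * x (m + d) + 1 := by
    simpa only [add_assoc, Nat.add_sub_cancel_left] using hrec
  intro m
  rw [hJ, hJ, Nat.add_sub_cancel_left, div_eq_div_iff (hnz _) (hnz _),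
    show m + d + k = m + k + d by ring]
  exact (add_mul_eq_add_mul_of_det_const k d x 1 hdet m).symm

/-- Section 7.3: the `(n−k)`-invariant for the recurrence generated by the
sink-type binomial `P = x_k·x_{n−k} + 1`. -/
theorem stmt16 {K : Type*} [Field K] (n k : ℕ) (hk : 0 < k) (hkn : k < n)
    (x : ℕ → K) (hnz : ∀ m, x m ≠ 0)
    (hrec : ∀ m, x m * x (m + n) = x (m + k) * x (m + (n - k)) + 1)
    (J : ℕ → K)
    (hJ : ∀ m, J m = (x m + x (m + 2 * k)) / x (m + k)) :
    ∀ m, J (m + (n - k)) = J m :=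
  stmt16_general n k hkn x hnz hrec J hJ
end

section
/- Let K be a field, n ≥ 2 a natural number, A, B ∈ K, and let x : ℕ → K be a sequence with x_m ≠ 0 for all m satisfying x_m · x_{m+n} = x_{m+1}·x_{m+n−1} + A·∑_{i=1}^{n−1} x_{m+i} + B for all m ≥ 0. Define J_m = (x_{m+2} + x_m + A) / x_{m+1}. Then J_{m+n−1} = J_m for all m ≥ 0; that is, J_m is an (n−1)-invariant of the recurrence, depending only on the residue of m modulo n−1. -/
/-!
Subtracting the recurrence at `m` from the recurrence at `m + 1`, the two sums `A · ∑ x_{m+i}`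
telescope to `A · (x_{m+n} - x_{m+1})`, and what is left factors as
`x_{m+1} · (x_{m+n+1} + x_{m+n-1} + A) = x_{m+n} · (x_{m+2} + x_m + A)`.
Dividing by `x_{m+1} · x_{m+n}` gives `J_{m+n-1} = J_m`.
-/

open Finset

theorem sum_Icc_succ_sub_sum_Icc {M : Type*} [AddCommGroup M] (f : ℕ → M) (m k : ℕ) :
    ∑ i ∈ Icc 1 k, f (m + 1 + i) - ∑ i ∈ Icc 1 k, f (m + i) = f (m + k + 1) - f (m + 1) := by
  induction k with
  | zero => simp
  | succ k ih =>
    rw [sum_Icc_succ_top (by omega), sum_Icc_succ_top (by omega), add_sub_add_comm, ih,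
      show m + 1 + (k + 1) = m + (k + 1) + 1 by omega, ← add_assoc m k 1]
    abel

theorem extreme_recurrence_cross_mul {R : Type*} [CommRing R] (k : ℕ) (A B : R) (x : ℕ → R)
    (hrec : ∀ m, x m * x (m + (k + 2)) =
      x (m + 1) * x (m + (k + 1)) + A * ∑ i ∈ Icc 1 (k + 1), x (m + i) + B) (m : ℕ) :
    (x (m + (k + 1) + 2) + x (m + (k + 1)) + A) * x (m + 1) =
      (x (m + 2) + x m + A) * x (m + (k + 1) + 1) := by
  have h₀ := hrec m
  have h₁ := hrec (m + 1)
  have hsum := sum_Icc_succ_sub_sum_Icc x m (k + 1)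
  ring_nf at h₀ h₁ hsum ⊢
  linear_combination h₁ - h₀ + A * hsum

theorem stmt17_general {K : Type*} [Field K] (n : ℕ) (A B : K)
    (x : ℕ → K) (hnz : ∀ m, x m ≠ 0)
    (hrec : ∀ m, x m * x (m + n) =
      x (m + 1) * x (m + (n - 1)) + A * (∑ i ∈ Finset.Icc 1 (n - 1), x (m + i)) + B)
    (J : ℕ → K)
    (hJ : ∀ m, J m = (x (m + 2) + x m + A) / x (m + 1)) :
    ∀ m, J (m + (n - 1)) = J m := by
  intro m
  rcases n with _ | _ | k
  · rfl
  · rfl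
  · simp only [Nat.add_sub_cancel] at hrec ⊢
    rw [hJ, hJ, div_eq_div_iff (hnz _) (hnz _)]
    exact extreme_recurrence_cross_mul k A B x hrec m

/-- Section 7.4: the `(n−1)`-invariant for the recurrence generated by the
extreme polynomial `P = x_1·x_{n−1} + A·∑ x_i + B`. -/
theorem stmt17 {K : Type*} [Field K] (n : ℕ) (hn : 2 ≤ n) (A B : K)
    (x : ℕ → K) (hnz : ∀ m, x m ≠ 0)
    (hrec : ∀ m, x m * x (m + n) =
      x (m + 1) * x (m + (n - 1)) + A * (∑ i ∈ Finset.Icc 1 (n - 1), x (m + i)) + B)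
    (J : ℕ → K)
    (hJ : ∀ m, J m = (x (m + 2) + x m + A) / x (m + 1)) :
    ∀ m, J (m + (n - 1)) = J m :=
  stmt17_general n A B x hnz hrec J hJ
end

section
/- Let K be a field, let n > 2 be an odd natural number, let A, B ∈ K, and let x : ℕ → K be a sequence with x_m ≠ 0 for all m satisfying x_m · x_{m+n} = ∑_{i=1}^{n−2} x_{m+i}·x_{m+i+1} + A·∑_{i=1}^{n−1} x_{m+i} + B for all m ≥ 0. Define J_m = (x_{m+n−1} + x_m + A) / ∏_{i=0}^{(n−3)/2} x_{m+2i+1}. Then J_{m+2} = J_m for all m ≥ 0; that is, J_m is a 2-invariant of the recurrence, depending only on the parity of m. -/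
/-!
Subtracting the recurrence at `m` from the recurrence at `m + 1`, both chain sums telescope and
leave the cross identity `x_{m+1} (x_{m+n+1} + x_{m+2} + A) = x_{m+n} (x_{m+n-1} + x_m + A)`.
For `n = 2k + 3`, the denominator of `J_{m+2}` is that of `J_m` with the factor `x_{m+1}`
traded for `x_{m+n}`, which is exactly the exchange the cross identity performs on the numerators.
-/

open Finset

theorem Finset.sum_Icc_one_succ_add {M : Type*} [AddCommMonoid M] (f : ℕ → M) (N : ℕ) :
    ∑ i ∈ Icc 1 N, f (i + 1) + f 1 = ∑ i ∈ Icc 1 N, f i + f (N + 1) := by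
  induction N with
  | zero => simp
  | succ N ih =>
    rw [sum_Icc_succ_top (by omega), sum_Icc_succ_top (by omega), add_right_comm, ih,
      add_right_comm]

theorem Finset.prod_range_succ_mul_eq_prod_range_mul {M : Type*} [CommMonoid M] (f : ℕ → M)
    (k : ℕ) : (∏ i ∈ range k, f (i + 1)) * f 0 = (∏ i ∈ range k, f i) * f k := by
  rw [← prod_range_succ', prod_range_succ]

theorem chain_recurrence_cross_identity {R : Type*} [CommRing R] (n : ℕ) (hn : 2 ≤ n) (A B : R)
    (x : ℕ → R)
    (hrec : ∀ m, x m * x (m + n) =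
      (∑ i ∈ Icc 1 (n - 2), x (m + i) * x (m + i + 1)) +
        A * (∑ i ∈ Icc 1 (n - 1), x (m + i)) + B)
    (m : ℕ) :
    x (m + 1) * (x (m + 1 + n) + x (m + 2) + A) = x (m + n) * (x (m + (n - 1)) + x m + A) := by
  obtain ⟨N, rfl⟩ := Nat.exists_eq_add_of_le' hn
  have hprod := sum_Icc_one_succ_add (fun i ↦ x (m + i) * x (m + i + 1)) N
  have hlin := sum_Icc_one_succ_add (fun i ↦ x (m + i)) (N + 1)
  have hcur := hrec m
  have hnext := hrec (m + 1)
  simp only [Nat.add_sub_cancel, Nat.add_succ_sub_one] at hcur hnext ⊢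
  ring_nf at hcur hnext hprod hlin ⊢
  linear_combination hnext + hprod + A * hlin - hcur

/-- Section 7.5: the 2-invariant for the recurrence generated by the chain
polynomial `P = ∑ x_i·x_{i+1} + A·∑ x_i + B`, `n` odd. -/
theorem stmt18 {K : Type*} [Field K] (n : ℕ) (hn : 2 < n) (hodd : Odd n) (A B : K)
    (x : ℕ → K) (hnz : ∀ m, x m ≠ 0)
    (hrec : ∀ m, x m * x (m + n) =
      (∑ i ∈ Finset.Icc 1 (n - 2), x (m + i) * x (m + i + 1)) +
        A * (∑ i ∈ Finset.Icc 1 (n - 1), x (m + i)) + B)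
    (J : ℕ → K)
    (hJ : ∀ m, J m = (x (m + (n - 1)) + x m + A) /
      ∏ i ∈ Finset.range ((n - 3) / 2 + 1), x (m + 2 * i + 1)) :
    ∀ m, J (m + 2) = J m := by
  obtain ⟨k, rfl⟩ : ∃ k, n = 2 * k + 3 := by
    obtain ⟨j, rfl⟩ := hodd
    exact ⟨j - 1, by omega⟩
  set Q : ℕ → K := fun m ↦ ∏ i ∈ range (k + 1), x (m + 2 * i + 1) with hQ
  have hJQ : ∀ m, J m = (x (m + (2 * k + 2)) + x m + A) / Q m := fun m ↦ by
    rw [hJ, show (2 * k + 3 - 3) / 2 + 1 = k + 1 by omega, show 2 * k + 3 - 1 = 2 * k + 2 by omega]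
  have hQ_shift : ∀ m, Q (m + 2) * x (m + 1) = Q m * x (m + (2 * k + 3)) := fun m ↦ by
    have := prod_range_succ_mul_eq_prod_range_mul (fun i ↦ x (m + 2 * i + 1)) (k + 1)
    simp only [hQ]
    ring_nf at this ⊢
    exact this
  have hcross := chain_recurrence_cross_identity _ (by omega) A B x hrec
  simp only [show 2 * k + 3 - 1 = 2 * k + 2 by omega] at hcross
  intro m
  calc J (m + 2)
      = x (m + 1) * (x (m + 1 + (2 * k + 3)) + x (m + 2) + A) / (Q (m + 2) * x (m + 1)) := by
        rw [hJQ, mul_comm (Q _), mul_div_mul_left _ _ (hnz _),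
          show m + 2 + (2 * k + 2) = m + 1 + (2 * k + 3) by omega]
    _ = x (m + (2 * k + 3)) * (x (m + (2 * k + 2)) + x m + A) / (Q m * x (m + (2 * k + 3))) := by
        rw [hcross, hQ_shift]
    _ = J m := by
        rw [mul_comm (Q _), mul_div_mul_left _ _ (hnz _), hJQ]
end
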